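/- arXiv:1511.00322 — 14 statements merged into one kernel-verified Lean document; each statement's English description precedes it below -/
import Mathlib

section
/- Let q be a prime power, m ≥ 1, {β₁,…,β_m} and {γ₁,…,γ_m} two bases of GF(q^m) over GF(q), A an m×m nonsingular matrix over GF(q), and f₁,…,f_m polynomials over GF(q). Define F(z) = γ₁f₁(x₁)+…+γ_m f_m(x_m), where (x₁,…,x_m)=(z₁,…,z_m)A and z = β₁z₁+…+β_m z_m. Then F is a permutation of GF(q^m) if and only if every f_i is a permutation polynomial of GF(q). -/
open Polynomial

/-
In the coordinates given by the two bases, `F` is the composite of the coordinate isomorphism for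
`β`, the invertible linear map `x ↦ x A` of `GF(q)^m`, the coordinatewise map `(xᵢ) ↦ (fᵢ(xᵢ))`
and the inverse coordinate isomorphism for `γ`. So `F` is bijective iff the coordinatewise map is,
and a product of maps between nonempty sets is bijective iff each factor is.
-/

namespace Function

variable {ι : Type*} {α β : ι → Type*} [∀ i, Nonempty (α i)] {f : ∀ i, α i → β i}

theorem injective_piMap_iff : Injective (Pi.map f) ↔ ∀ i, Injective (f i) := by
  classical
  refine ⟨fun hf i a b hab => ?_, Injective.piMap⟩
  let x : ∀ j, α j := fun j => Classical.arbitrary (α j)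
  have hupdate : Function.update x i a = Function.update x i b := by
    apply hf
    ext j
    rcases eq_or_ne j i with rfl | hj
    · simpa using hab
    · simp [hj]
  simpa using congrFun hupdate i

theorem surjective_piMap_iff : Surjective (Pi.map f) ↔ ∀ i, Surjective (f i) := by
  classical
  refine ⟨fun hf i c => ?_, Surjective.piMap⟩
  let x : ∀ j, α j := fun j => Classical.arbitrary (α j)
  obtain ⟨v, hv⟩ := hf (Function.update (Pi.map f x) i c)
  exact ⟨v i, by simpa using congrFun hv i⟩

theorem bijective_piMap_iff : Bijective (Pi.map f) ↔ ∀ i, Bijective (f i) := by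
  simp only [Bijective, injective_piMap_iff, surjective_piMap_iff, forall_and]

end Function

theorem Matrix.vecMul_bijective_of_isUnit {m R : Type*} [Fintype m] [DecidableEq m] [CommRing R]
    {A : Matrix m m R} (hA : IsUnit A) : Function.Bijective (vecMul · A) :=
  ⟨vecMul_injective_of_isUnit hA, vecMul_surjective_iff_isUnit.2 hA⟩

theorem stmt_0_general {F E : Type*} [Field F] [Field E] [Algebra F E]
    (m : ℕ)
    (Bβ Bγ : Module.Basis (Fin m) F E)
    (A : Matrix (Fin m) (Fin m) F) (hA : IsUnit A.det)
    (f : Fin m → Polynomial F) :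
    Function.Bijective (fun z : E =>
      ∑ i, ((f i).eval (Matrix.vecMul (fun j => Bβ.repr z j) A i)) • Bγ i)
      ↔ ∀ i, Function.Bijective (fun x : F => (f i).eval x) := by
  have hfactor : (fun z : E =>
      ∑ i, ((f i).eval (Matrix.vecMul (fun j => Bβ.repr z j) A i)) • Bγ i) =
      Bγ.equivFun.symm ∘ Pi.map (fun i x => (f i).eval x) ∘ (Matrix.vecMul · A) ∘ Bβ.equivFun := by
    ext z
    simp [Module.Basis.equivFun_symm_apply]
  have hvecMul := Matrix.vecMul_bijective_of_isUnit ((Matrix.isUnit_iff_isUnit_det A).2 hA)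
  rw [hfactor, Function.Bijective.of_comp_iff' Bγ.equivFun.symm.bijective,
    ← Function.comp_assoc, Function.Bijective.of_comp_iff _ Bβ.equivFun.bijective,
    Function.Bijective.of_comp_iff _ hvecMul]
  exact Function.bijective_piMap_iff

/-- PPs over GF(q^m) from PPs over GF(q) via bases and a nonsingular matrix. -/
theorem stmt_0 {F E : Type*} [Field F] [Fintype F] [Field E] [Algebra F E]
    (m : ℕ) (hm : 1 ≤ m)
    (Bβ Bγ : Module.Basis (Fin m) F E)
    (A : Matrix (Fin m) (Fin m) F) (hA : IsUnit A.det)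
    (f : Fin m → Polynomial F) :
    Function.Bijective (fun z : E =>
      ∑ i, ((f i).eval (Matrix.vecMul (fun j => Bβ.repr z j) A i)) • Bγ i)
      ↔ ∀ i, Function.Bijective (fun x : F => (f i).eval x) :=
  stmt_0_general m Bβ Bγ A hA f
end

section
/- Let q = 2^m with m > 1 and let f be an o-polynomial over GF(q). Then the map z ↦ x·f(y·x^{q-2}) + βy when y ≠ 0, and z ↦ x when y = 0, where z = x + βy with x,y ∈ GF(q) and β a generator of GF(q²)*, is a permutation of GF(q²). -/
open scoped Classical

/-- `f` is an o-polynomial over the finite field `F` of characteristic 2. -/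
def IsOPoly {F : Type*} [Field F] [Fintype F] (f : F → F) : Prop :=
  Function.Bijective f ∧ f 0 = 0 ∧
    ∀ s : F, Function.Bijective fun x : F =>
      (f (x + s) + f s) * x ^ (Fintype.card F - 2)

/-- the map z = x + βy ↦ x·f(y·x^{q-2}) + βy (y ≠ 0), x (y = 0)
is a permutation of GF(q²), stated via the coordinate bijection F × F ≃ GF(q²). -/
theorem stmt_1 {F E : Type*} [Field F] [Fintype F] [Field E] [Algebra F E]
    (m : ℕ) (hm : 1 < m) (hcard : Fintype.card F = 2 ^ m)
    (hdim : Module.finrank F E = 2)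
    (β : E) (hβ : ∀ x : E, x ≠ 0 → ∃ n : ℕ, β ^ n = x)
    (f : F → F) (hf : IsOPoly f) :
    Function.Bijective fun p : F × F =>
      if p.2 = 0 then algebraMap F E p.1
      else algebraMap F E (p.1 * f (p.2 * p.1 ^ (Fintype.card F - 2))) + p.2 • β := by
  obtain ⟨hfb, hf0, hfs⟩ := hf
  set q := Fintype.card F with hqdef
  have hq4 : 4 ≤ q := by
    show 4 ≤ q
    rw [hcard]
    calc (4:ℕ) = 2 ^ 2 := rfl
    _ ≤ 2 ^ m := Nat.pow_le_pow_right (by norm_num) hm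
  -- x^(q-2) = x⁻¹ for nonzero x
  have hpow : ∀ x : F, x ≠ 0 → x ^ (q - 2) = x⁻¹ := by
    intro x hx
    have h1 : x ^ (q - 1) = 1 := FiniteField.pow_card_sub_one_eq_one x hx
    have h2 : x ^ (q - 2) * x = 1 := by
      rw [← pow_succ, show q - 2 + 1 = q - 1 by omega]; exact h1
    exact eq_inv_of_mul_eq_one_left h2
  -- β is not in the range of algebraMap
  have hβnot : ∀ c : F, β ≠ algebraMap F E c := by
    intro c hc
    have hsurj : Function.Surjective (algebraMap F E) := by
      intro x
      by_cases hx : x = 0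
      · exact ⟨0, by simp [hx]⟩
      · obtain ⟨n, hn⟩ := hβ x hx
        exact ⟨c ^ n, by rw [map_pow, ← hc, hn]⟩
    have hfd : FiniteDimensional F E :=
      FiniteDimensional.of_finrank_pos (by rw [hdim]; norm_num)
    have h1 : Module.finrank F E = 1 := by
      rw [← Subalgebra.bot_eq_top_iff_finrank_eq_one]
      ext x; simp [Algebra.mem_bot, hsurj x]
    rw [hdim] at h1; norm_num at h1
  -- injectivity of the algebraMap
  have halginj : Function.Injective (algebraMap F E) := (algebraMap F E).injective
  -- combining lemma: algebraMap a + y1 • β = algebraMap b + y2 • β → y1 = y2 ∧ a = b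
  have hcoord : ∀ a b y1 y2 : F,
      algebraMap F E a + y1 • β = algebraMap F E b + y2 • β → y1 = y2 ∧ a = b := by
    intro a b y1 y2 h
    have hy : y1 = y2 := by
      by_contra hy
      have h' : (y1 - y2) • β = algebraMap F E (b - a) := by
        rw [map_sub, sub_smul]
        linear_combination (norm := module) h
      have : β = algebraMap F E ((y1 - y2)⁻¹ * (b - a)) := by
        have hne : y1 - y2 ≠ 0 := sub_ne_zero.mpr hy
        rw [map_mul, ← h', Algebra.smul_def, ← mul_assoc, ← map_mul,
          inv_mul_cancel₀ hne, map_one, one_mul]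
      exact hβnot _ this
    subst hy
    refine ⟨rfl, halginj ?_⟩
    have := add_right_cancel h
    exact this
  -- injectivity of inner map for fixed y ≠ 0
  have hinner : ∀ y : F, y ≠ 0 → ∀ x1 x2 : F,
      x1 * f (y * x1 ^ (q - 2)) = x2 * f (y * x2 ^ (q - 2)) → x1 = x2 := by
    intro y hy x1 x2 h
    have hfnz : ∀ u : F, u ≠ 0 → f u ≠ 0 := by
      intro u hu hfu
      exact hu (hfb.1 (hfu.trans hf0.symm))
    have hval : ∀ x : F, x ≠ 0 → x * f (y * x ^ (q - 2)) ≠ 0 := by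
      intro x hx
      have hu : y * x ^ (q - 2) ≠ 0 := by
        rw [hpow x hx]
        exact mul_ne_zero hy (inv_ne_zero hx)
      exact mul_ne_zero hx (hfnz _ hu)
    by_cases h1 : x1 = 0
    · by_cases h2 : x2 = 0
      · rw [h1, h2]
      · exfalso; apply hval x2 h2; rw [← h, h1, zero_mul]
    · by_cases h2 : x2 = 0
      · exfalso; apply hval x1 h1; rw [h, h2, zero_mul]
      · -- both nonzero
        set u1 := y * x1 ^ (q - 2) with hu1
        set u2 := y * x2 ^ (q - 2) with hu2
        have hu1ne : u1 ≠ 0 := by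
          rw [hu1, hpow x1 h1]; exact mul_ne_zero hy (inv_ne_zero h1)
        have hu2ne : u2 ≠ 0 := by
          rw [hu2, hpow x2 h2]; exact mul_ne_zero hy (inv_ne_zero h2)
        -- f u1 * u1⁻¹ = f u2 * u2⁻¹
        have e1 : u1⁻¹ = y⁻¹ * x1 := by rw [hu1, hpow x1 h1, mul_inv, inv_inv]
        have e2 : u2⁻¹ = y⁻¹ * x2 := by rw [hu2, hpow x2 h2, mul_inv, inv_inv]
        have hkey : f u1 * u1 ^ (q - 2) = f u2 * u2 ^ (q - 2) := by
          rw [hpow _ hu1ne, hpow _ hu2ne, e1, e2]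
          calc f u1 * (y⁻¹ * x1) = (x1 * f u1) * y⁻¹ := by ring
          _ = (x2 * f u2) * y⁻¹ := by rw [h]
          _ = f u2 * (y⁻¹ * x2) := by ring
        have := hfs 0
        have heq : (fun x : F => (f (x + 0) + f 0) * x ^ (q - 2)) u1 =
            (fun x : F => (f (x + 0) + f 0) * x ^ (q - 2)) u2 := by
          simp only [add_zero, hf0]
          simpa using hkey
        have hu : u1 = u2 := (hfs 0).1 heq
        have : x1⁻¹ = x2⁻¹ := by
          have := hu
          rw [hu1, hu2, hpow x1 h1, hpow x2 h2] at this
          exact mul_left_cancel₀ hy this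
        exact inv_injective this
  -- now prove injectivity of the whole map
  have hfd : FiniteDimensional F E :=
    FiniteDimensional.of_finrank_pos (by rw [hdim]; norm_num)
  have hEfin : Finite E := Module.finite_of_finite F
  have hEfintype : Fintype E := Fintype.ofFinite E
  have hcardE : Fintype.card E = q ^ 2 := by
    rw [show Fintype.card E = Fintype.card F ^ Module.finrank F E from
      Module.card_eq_pow_finrank, hdim]
  suffices hinjall : Function.Injective (fun p : F × F =>
      if p.2 = 0 then algebraMap F E p.1
      else algebraMap F E (p.1 * f (p.2 * p.1 ^ (q - 2))) + p.2 • β) by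
    rw [Fintype.bijective_iff_injective_and_card]
    refine ⟨hinjall, ?_⟩
    rw [Fintype.card_prod, hcardE]
    ring
  intro p1 p2 h
  obtain ⟨x1, y1⟩ := p1
  obtain ⟨x2, y2⟩ := p2
  simp only at h
  by_cases h1 : y1 = 0 <;> by_cases h2 : y2 = 0
  · rw [if_pos h1, if_pos h2] at h
    exact Prod.ext (halginj h) (h1.trans h2.symm)
  · rw [if_pos h1, if_neg h2] at h
    exfalso
    have h' : algebraMap F E x1 + (0:F) • β =
        algebraMap F E (x2 * f (y2 * x2 ^ (q - 2))) + y2 • β := by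
      rw [zero_smul, add_zero]; exact h
    exact h2 ((hcoord _ _ _ _ h').1).symm
  · rw [if_neg h1, if_pos h2] at h
    exfalso
    have h' : algebraMap F E (x1 * f (y1 * x1 ^ (q - 2))) + y1 • β =
        algebraMap F E x2 + (0:F) • β := by
      rw [zero_smul, add_zero]; exact h
    exact h1 (hcoord _ _ _ _ h').1
  · rw [if_neg h1, if_neg h2] at h
    obtain ⟨hy, hx⟩ := hcoord _ _ _ _ h
    subst hy
    exact Prod.ext (hinner y1 h1 x1 x2 hx) rfl
end

section
/- Let q = 2^m and let f be an o-polynomial over GF(q). Then for every nonzero y ∈ GF(q), the map x ↦ x·f(y·x^{q-2}) is a permutation of GF(q). -/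
open Function

theorem FiniteField.pow_card_sub_two_eq_inv {K : Type*} [GroupWithZero K] [Fintype K] {x : K}
    (hx : x ≠ 0) : x ^ (Fintype.card K - 2) = x⁻¹ := by
  have hcard : 1 < Fintype.card K := Fintype.one_lt_card
  refine eq_inv_of_mul_eq_one_left ?_
  rw [← pow_succ, show Fintype.card K - 2 + 1 = Fintype.card K - 1 by omega]
  exact FiniteField.pow_card_sub_one_eq_one x hx

/-- At `x = 0` the two sides agree because both vanish, even when `0 ^ (q - 2) = 1`. -/
theorem FiniteField.mul_apply_pow_card_sub_two {K : Type*} [GroupWithZero K] [Fintype K]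
    (g : K → K) (x : K) : x * g (x ^ (Fintype.card K - 2)) = x * g x⁻¹ := by
  rcases eq_or_ne x 0 with rfl | hx
  · simp only [zero_mul]
  · rw [FiniteField.pow_card_sub_two_eq_inv hx]

theorem FiniteField.apply_mul_pow_card_sub_two {K : Type*} [GroupWithZero K] [Fintype K]
    {g : K → K} (hg : g 0 = 0) (x : K) : g x * x ^ (Fintype.card K - 2) = g x / x := by
  rcases eq_or_ne x 0 with rfl | hx
  · simp only [hg, zero_mul, zero_div]
  · rw [FiniteField.pow_card_sub_two_eq_inv hx, div_eq_mul_inv]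

theorem IsOPoly.bijective_div {F : Type*} [Field F] [Fintype F] {f : F → F} (hf : IsOPoly f) :
    Bijective fun x : F => f x / x := by
  obtain ⟨-, hf0, hshift⟩ := hf
  simpa only [add_zero, hf0, FiniteField.apply_mul_pow_card_sub_two hf0] using hshift 0

theorem bijective_mul_apply_div {K : Type*} [CommGroupWithZero K] {g : K → K} (hg : g 0 = 0)
    (hdiv : Bijective fun t : K => g t / t) {y : K} (hy : y ≠ 0) :
    Bijective fun x : K => x * g (y / x) := by
  have hcomp : (fun x : K => x * g (y / x))
      = (y * ·) ∘ (fun t : K => g t / t) ∘ (y * ·) ∘ Inv.inv := by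
    funext x
    rcases eq_or_ne x 0 with rfl | hx
    · simp only [div_zero, hg, comp_apply, inv_zero, mul_zero]
    · simp only [comp_apply]
      field_simp
  rw [hcomp]
  exact (mulLeft_bijective₀ y hy).comp <| hdiv.comp <| (mulLeft_bijective₀ y hy).comp inv_bijective

theorem stmt_2_general {F : Type*} [Field F] [Fintype F]
    (f : F → F) (hf : IsOPoly f) :
    ∀ y : F, y ≠ 0 →
      Function.Bijective fun x : F => x * f (y * x ^ (Fintype.card F - 2)) := by
  intro y hy
  simpa only [FiniteField.mul_apply_pow_card_sub_two (fun t => f (y * t)), ← div_eq_mul_inv]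
    using bijective_mul_apply_div hf.2.1 hf.bijective_div hy

/-- if f is an o-polynomial then x ↦ x·f(y·x^{q-2}) permutes GF(q) for y ≠ 0. -/
theorem stmt_2 {F : Type*} [Field F] [Fintype F]
    (m : ℕ) (hcard : Fintype.card F = 2 ^ m)
    (f : F → F) (hf : IsOPoly f) :
    ∀ y : F, y ≠ 0 →
      Function.Bijective fun x : F => x * f (y * x ^ (Fintype.card F - 2)) :=
  stmt_2_general f hf
end

section
/- If f is an o-polynomial over GF(2^m), then its compositional inverse f^{-1} is also an o-polynomial over GF(2^m). -/
/-- the compositional inverse of an o-polynomial is an o-polynomial. -/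
theorem stmt_3 {F : Type*} [Field F] [Fintype F]
    (m : ℕ) (hcard : Fintype.card F = 2 ^ m)
    (f g : F → F) (hf : IsOPoly f)
    (hgf : ∀ x, g (f x) = x) (hfg : ∀ x, f (g x) = x) :
    IsOPoly g := by
  classical
  obtain ⟨hfb, hf0, hfo⟩ := hf
  have hgb : Function.Bijective g :=
    Function.bijective_iff_has_inverse.mpr ⟨f, hfg, hgf⟩
  have hg0 : g 0 = 0 := by have := hgf 0; rwa [hf0] at this
  haveI : CharP F (ringChar F) := ringChar.charP F
  obtain ⟨n, hp, hcardp⟩ := FiniteField.card F (ringChar F)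
  have hchar : ringChar F = 2 := by
    have h1 : ringChar F ∣ 2 ^ m := by
      rw [← hcard, hcardp]; exact dvd_pow_self _ n.pos.ne'
    exact (Nat.prime_dvd_prime_iff_eq hp Nat.prime_two).mp (hp.dvd_of_dvd_pow h1)
  haveI : CharP F 2 := hchar ▸ ringChar.charP F
  have hself : ∀ a : F, a + a = 0 := fun a => CharTwo.add_self_eq_zero a
  have h2 : ∀ a b : F, a + b + b = a := fun a b => by
    rw [add_assoc, hself, add_zero]
  refine ⟨hgb, hg0, fun s => ?_⟩
  rcases Nat.lt_or_ge (Fintype.card F) 3 with hq | hq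
  · have hq2 : Fintype.card F = 2 := le_antisymm (by omega) Fintype.one_lt_card
    have hz : Fintype.card F - 2 = 0 := by omega
    simp only [hz, pow_zero, mul_one]
    have heq : (fun x : F => g (x + s) + g s)
        = (fun y => y + g s) ∘ g ∘ (fun x => x + s) := rfl
    rw [heq]
    exact (Equiv.addRight (g s)).bijective.comp (hgb.comp (Equiv.addRight s).bijective)
  · have hkey : ∀ x : F, x ^ (Fintype.card F - 2) = x⁻¹ := by
      intro x
      rcases eq_or_ne x 0 with rfl | hx
      · rw [zero_pow (by omega), inv_zero]
      · have h1 : x ^ (Fintype.card F - 1) = 1 := FiniteField.pow_card_sub_one_eq_one x hx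
        have hmul : x ^ (Fintype.card F - 2) * x = 1 := by
          rw [← pow_succ]
          have h3 : Fintype.card F - 2 + 1 = Fintype.card F - 1 := by omega
          rw [h3, h1]
        exact eq_inv_of_mul_eq_one_left hmul
    simp only [hkey]
    apply Finite.injective_iff_bijective.mp
    set t := g s with ht
    have hft : f t = s := hfg s
    have hNZ : ∀ x : F, x ≠ 0 → g (x + s) + t ≠ 0 := by
      intro x hx h
      apply hx
      have h3 : g (x + s) = t := by
        calc g (x + s) = g (x + s) + (t + t) := by rw [hself, add_zero]
        _ = (g (x + s) + t) + t := by ring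
        _ = t := by rw [h, zero_add]
      have h4 : x + s = s := by
        have := congrArg f h3
        rwa [hfg, hft] at this
      calc x = x + s + s := (h2 x s).symm
      _ = s + s := by rw [h4]
      _ = 0 := hself s
    intro x y hxy
    simp only at hxy
    rcases eq_or_ne x 0 with rfl | hx
    · rcases eq_or_ne y 0 with rfl | hy
      · rfl
      · exfalso
        rw [inv_zero, mul_zero] at hxy
        exact (mul_ne_zero (hNZ y hy) (inv_ne_zero hy)) hxy.symm
    · rcases eq_or_ne y 0 with rfl | hy
      · exfalso
        rw [inv_zero, mul_zero] at hxy
        exact (mul_ne_zero (hNZ x hx) (inv_ne_zero hx)) hxy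
      · set u := g (x + s) + t with hu
        set v := g (y + s) + t with hv
        have hu0 : u ≠ 0 := hNZ x hx
        have hv0 : v ≠ 0 := hNZ y hy
        have hxu : f (u + t) + f t = x := by
          have h5 : u + t = g (x + s) := h2 _ _
          rw [h5, hfg, hft, h2]
        have hyv : f (v + t) + f t = y := by
          have h5 : v + t = g (y + s) := h2 _ _
          rw [h5, hfg, hft, h2]
        have hcross : u * y = v * x := by
          field_simp at hxy
          linear_combination hxy
        have hpsi : (f (u + t) + f t) * u ^ (Fintype.card F - 2)
            = (f (v + t) + f t) * v ^ (Fintype.card F - 2) := by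
          rw [hkey, hkey, hxu, hyv]
          field_simp
          linear_combination -hcross
        have huv : u = v := (hfo t).injective hpsi
        rw [← hxu, ← hyv, huv]
end

section
/- If f is an o-polynomial over GF(2^m) and 1 ≤ j ≤ m−1, then the map x ↦ f(x^{2^j})^{2^{m-j}} is also an o-polynomial over GF(2^m). -/
/-- if f is an o-polynomial over GF(2^m) then x ↦ f(x^{2^j})^{2^{m-j}} is too. -/
theorem stmt_4 {F : Type*} [Field F] [Fintype F]
    (m : ℕ) (hcard : Fintype.card F = 2 ^ m)
    (f : F → F) (hf : IsOPoly f)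
    (j : ℕ) (hj1 : 1 ≤ j) (hj2 : j ≤ m - 1) :
    IsOPoly fun x : F => (f (x ^ 2 ^ j)) ^ 2 ^ (m - j) := by
  have hm : 2 ≤ m := by omega
  obtain ⟨p, hpc⟩ := CharP.exists F
  haveI := hpc
  haveI hfact : Fact p.Prime := ⟨CharP.char_is_prime F p⟩
  obtain ⟨n, -, hcard'⟩ := FiniteField.card F p
  have hp2 : p = 2 := by
    have hd : p ∣ 2 ^ m := by
      rw [← hcard, hcard']
      exact dvd_pow_self p n.pos.ne'
    exact (Nat.prime_dvd_prime_iff_eq hfact.out Nat.prime_two).mp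
      (hfact.out.dvd_of_dvd_pow hd)
  subst hp2
  have hpow : ∀ (x : F) (a b : ℕ), a + b = m → (x ^ 2 ^ a) ^ 2 ^ b = x := by
    intro x a b hab
    rw [← pow_mul, ← pow_add, hab, ← hcard, FiniteField.pow_card]
  have hjm : j + (m - j) = m := by omega
  have hmj : (m - j) + j = m := by omega
  set σ : F → F := fun x => x ^ 2 ^ j with hσ
  set τ : F → F := fun x => x ^ 2 ^ (m - j) with hτ
  have hστ : ∀ x, τ (σ x) = x := fun x => hpow x j (m - j) hjm
  have hτσ : ∀ x, σ (τ x) = x := fun x => hpow x (m - j) j hmj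
  have hσbij : Function.Bijective σ := Function.bijective_iff_has_inverse.mpr ⟨τ, hστ, hτσ⟩
  have hτbij : Function.Bijective τ := Function.bijective_iff_has_inverse.mpr ⟨σ, hτσ, hστ⟩
  have hσadd : ∀ x y : F, σ (x + y) = σ x + σ y := fun x y => add_pow_char_pow x y 2 _
  have hτadd : ∀ x y : F, τ (x + y) = τ x + τ y := fun x y => add_pow_char_pow x y 2 _
  refine ⟨hτbij.comp (hf.1.comp hσbij), ?_, ?_⟩
  · show τ (f (σ 0)) = 0
    rw [hσ, hτ]
    simp only
    rw [zero_pow (by positivity), hf.2.1, zero_pow (by positivity)]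
  · intro s
    have hb := hf.2.2 (σ s)
    have heq : (fun x : F => ((f ((x + s) ^ 2 ^ j)) ^ 2 ^ (m - j) +
        (f (s ^ 2 ^ j)) ^ 2 ^ (m - j)) * x ^ (Fintype.card F - 2)) =
        τ ∘ (fun y : F => (f (y + σ s) + f (σ s)) * y ^ (Fintype.card F - 2)) ∘ σ := by
      funext x
      simp only [Function.comp, hσ, hτ]
      rw [mul_pow, add_pow_char_pow x s 2 j, add_pow_char_pow _ _ 2 (m - j), ← pow_mul,
        mul_comm (Fintype.card F - 2), pow_mul, hpow x j (m - j) hjm]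
    exact heq ▸ hτbij.comp (hb.comp hσbij)
end

section
/- Let m be a positive integer with gcd(h,m)=1. Then the Frobenius-power map x ↦ x^{2^h} is an o-polynomial over GF(2^m). -/
theorem FiniteField.pow_bijective_of_coprime {K : Type*} [Field K] [Fintype K] {n : ℕ}
    (hn : n ≠ 0) (hcop : n.Coprime (Fintype.card K - 1)) :
    Function.Bijective fun x : K => x ^ n := by
  classical
  have hunits : Function.Injective fun u : Kˣ => u ^ n := by
    refine (Nat.Coprime.pow_left_bijective ?_).injective
    rwa [Nat.card_eq_fintype_card, Fintype.card_units, Nat.coprime_comm]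
  refine Finite.injective_iff_bijective.mp fun a b hab => ?_
  rcases eq_or_ne a 0 with rfl | ha
  · rw [zero_pow hn, eq_comm, pow_eq_zero_iff hn] at hab
    exact hab.symm
  rcases eq_or_ne b 0 with rfl | hb
  · rw [zero_pow hn, pow_eq_zero_iff hn] at hab
    exact hab
  have := @hunits (Units.mk0 a ha) (Units.mk0 b hb) (Units.ext (by simpa))
  simpa using congrArg Units.val this

theorem CharTwo.add_pow_two_pow_add_pow_two_pow {R : Type*} [CommRing R] [CharP R 2]
    (x s : R) (h : ℕ) : (x + s) ^ 2 ^ h + s ^ 2 ^ h = x ^ 2 ^ h := by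
  rw [add_pow_char_pow, add_assoc, CharTwo.add_self_eq_zero, add_zero]

theorem stmt_7_general {F : Type*} [Field F] [Fintype F]
    (m : ℕ) (hcard : Fintype.card F = 2 ^ m)
    (h : ℕ) (hh : Nat.gcd h m = 1) :
    IsOPoly fun x : F => x ^ 2 ^ h := by
  have : CharP F 2 := charP_of_card_eq_prime_pow hcard
  refine ⟨bijective_iterateFrobenius F 2 h, zero_pow (pow_ne_zero h two_ne_zero), fun s => ?_⟩
  simp only [CharTwo.add_pow_two_pow_add_pow_two_pow, ← pow_add]
  have h2h : 1 ≤ 2 ^ h := Nat.one_le_two_pow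
  have hq : 2 ≤ Fintype.card F := Fintype.one_lt_card
  have hexp : 2 ^ h + (Fintype.card F - 2) = (2 ^ h - 1) + (Fintype.card F - 1) := by omega
  refine FiniteField.pow_bijective_of_coprime (by omega) ?_
  rw [hexp, Nat.coprime_add_self_left, hcard, Nat.coprime_iff_gcd_eq_one,
    Nat.pow_sub_one_gcd_pow_sub_one, hh, pow_one]

/-- the translation o-polynomials x ↦ x^{2^h}, gcd(h,m)=1. -/
theorem stmt_7 {F : Type*} [Field F] [Fintype F]
    (m : ℕ) (hm : 0 < m) (hcard : Fintype.card F = 2 ^ m)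
    (h : ℕ) (hh : Nat.gcd h m = 1) :
    IsOPoly fun x : F => x ^ 2 ^ h :=
  stmt_7_general m hcard h hh
end

section
/- Let q be a prime power and β ∈ GF(q²)\GF(q). For polynomials f₁, f₂ over GF(q), define F₂(z) = f₁((β^q z − β z^q)/(β^q − β)) + β·f₂(((β^q − 1)z − (β − 1)z^q)/(β^q − β)). Then F₂ is a permutation of GF(q²) if and only if both f₁ and f₂ are permutation polynomials of GF(q). -/
open Polynomial

/-- the second recursive construction. -/
theorem stmt_12 {F E : Type*} [Field F] [Fintype F] [Field E] [Algebra F E]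
    (hdim : Module.finrank F E = 2)
    (β : E) (hβ : β ∉ Set.range (algebraMap F E))
    (f₁ f₂ : Polynomial F) :
    Function.Bijective (fun z : E =>
      aeval ((β ^ Fintype.card F * z - β * z ^ Fintype.card F) /
          (β ^ Fintype.card F - β)) f₁ +
        β * aeval (((β ^ Fintype.card F - 1) * z - (β - 1) * z ^ Fintype.card F) /
          (β ^ Fintype.card F - β)) f₂)
      ↔ (Function.Bijective (fun x : F => f₁.eval x) ∧
          Function.Bijective (fun x : F => f₂.eval x)) := by
  classical
  have hcard : 2 ≤ Fintype.card F := Fintype.one_lt_card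
  set q := Fintype.card F with hqdef
  have halg : Function.Injective (algebraMap F E) := (algebraMap F E).injective
  haveI : FiniteDimensional F E := FiniteDimensional.of_finrank_eq_succ hdim
  obtain ⟨p, hp⟩ := CharP.exists F
  haveI : CharP F p := hp
  haveI hprime : Fact p.Prime := ⟨CharP.char_is_prime F p⟩
  haveI : CharP E p := charP_of_injective_algebraMap halg p
  obtain ⟨n, ⟨-, hn⟩⟩ := FiniteField.card F p
  have hfrob_add : ∀ a b : E, (a + b) ^ q = a ^ q + b ^ q := by
    intro a b
    rw [hqdef, hn]
    exact add_pow_char_pow a b p n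
  have hfix : ∀ x : F, (algebraMap F E x) ^ q = algebraMap F E x := by
    intro x
    rw [← map_pow, FiniteField.pow_card]
  -- fixed points of z ↦ z^q are exactly the image of F
  have hfixed : ∀ z : E, z ^ q = z → z ∈ Set.range (algebraMap F E) := by
    intro z hz
    set g : E[X] := X ^ q - X with hg
    have hdegg : g.natDegree = q := by
      rw [hg]
      compute_degree!
      · rw [if_neg (show ¬ (1 = q) by omega)]
        norm_num
      · omega
    have hgne : g ≠ 0 := by
      intro h
      rw [h, natDegree_zero] at hdegg
      omega
    set T : Finset E := Finset.univ.image (algebraMap F E) with hT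
    have hTcard : T.card = q := by
      rw [hT, Finset.card_image_of_injective _ halg, Finset.card_univ]
    have hTsub : T ⊆ g.roots.toFinset := by
      intro t ht
      rw [hT, Finset.mem_image] at ht
      obtain ⟨x, -, rfl⟩ := ht
      rw [Multiset.mem_toFinset, mem_roots hgne]
      simp [hg, hfix x]
    have hle : g.roots.toFinset.card ≤ q := by
      calc g.roots.toFinset.card ≤ Multiset.card g.roots := Multiset.toFinset_card_le _
        _ ≤ g.natDegree := g.card_roots'
        _ = q := hdegg
    have hTeq : T = g.roots.toFinset :=
      Finset.eq_of_subset_of_card_le hTsub (by omega)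
    have hzroot : z ∈ g.roots.toFinset := by
      rw [Multiset.mem_toFinset, mem_roots hgne]
      simp [hg, hz]
    rw [← hTeq, hT, Finset.mem_image] at hzroot
    obtain ⟨x, -, hx⟩ := hzroot
    exact ⟨x, hx⟩
  have hβq : β ^ q - β ≠ 0 := by
    intro h
    exact hβ (hfixed β (by linear_combination h))
  -- the linear map (x,y) ↦ algebraMap x + y • β
  set l : (F × F) →ₗ[F] E :=
    (Algebra.linearMap F E).coprod (LinearMap.toSpanSingleton F E β) with hl
  have hlapp : ∀ v : F × F, l v = algebraMap F E v.1 + v.2 • β := by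
    intro v
    simp [hl, LinearMap.toSpanSingleton_apply]
  have hlinj : Function.Injective l := by
    rw [injective_iff_map_eq_zero]
    rintro ⟨x, y⟩ hxy
    rw [hlapp] at hxy
    by_cases hy : y = 0
    · subst hy
      simp only [zero_smul, add_zero] at hxy
      have : x = 0 := halg (by simpa using hxy)
      simp [this]
    · exfalso
      apply hβ
      have hy' : algebraMap F E y ≠ 0 := by simpa using hy
      have hthis : algebraMap F E y * β = -(algebraMap F E x) := by
        rw [Algebra.smul_def] at hxy
        linear_combination hxy
      refine ⟨-x / y, ?_⟩
      rw [map_div₀, map_neg, div_eq_iff hy']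
      linear_combination -hthis
  have hrank : Module.finrank F (F × F) = Module.finrank F E := by
    simp [hdim]
  let e : (F × F) ≃ₗ[F] E := l.linearEquivOfInjective hlinj hrank
  have he : ∀ v : F × F, e v = algebraMap F E v.1 + v.2 • β := by
    intro v
    rw [show (e v : E) = l v from l.linearEquivOfInjective_apply hlinj hrank v, hlapp]
  -- key computation
  set G : E → E := fun z =>
      aeval ((β ^ q * z - β * z ^ q) / (β ^ q - β)) f₁ +
        β * aeval (((β ^ q - 1) * z - (β - 1) * z ^ q) / (β ^ q - β)) f₂ with hG
  have hkey : ∀ x y : F, G (e (x, y)) = e (f₁.eval x, f₂.eval (x + y)) := by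
    intro x y
    have hz : e (x, y) = algebraMap F E x + y • β := he (x, y)
    have hzq : (e (x, y)) ^ q = algebraMap F E x + y • β ^ q := by
      rw [hz, hfrob_add, hfix, Algebra.smul_def, Algebra.smul_def, mul_pow, hfix]
    have h1 : (β ^ q * e (x, y) - β * (e (x, y)) ^ q) / (β ^ q - β) = algebraMap F E x := by
      rw [hzq, hz, Algebra.smul_def, Algebra.smul_def, div_eq_iff hβq]
      ring
    have h2 : ((β ^ q - 1) * e (x, y) - (β - 1) * (e (x, y)) ^ q) / (β ^ q - β)
        = algebraMap F E (x + y) := by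
      rw [hzq, hz, Algebra.smul_def, Algebra.smul_def, div_eq_iff hβq, map_add]
      ring
    rw [hG]
    simp only [h1, h2]
    rw [aeval_algebraMap_apply, aeval_algebraMap_apply, he]
    simp only [coe_aeval_eq_eval]
    rw [Algebra.smul_def]
    ring
  -- transfer along the equivalence
  have hGdef : G = (e.toEquiv : (F × F) ≃ E) ∘
      (fun v : F × F => (f₁.eval v.1, f₂.eval (v.1 + v.2))) ∘ (e.toEquiv.symm : E ≃ F × F) := by
    funext z
    obtain ⟨⟨x, y⟩, rfl⟩ := e.toEquiv.surjective z
    simp only [Function.comp_apply, Equiv.symm_apply_apply]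
    exact hkey x y
  rw [hGdef]
  rw [Equiv.comp_bijective, Equiv.bijective_comp]
  -- now: Bijective (fun v => (f₁.eval v.1, f₂.eval (v.1+v.2))) ↔ _
  have hshear : (fun v : F × F => (f₁.eval v.1, f₂.eval (v.1 + v.2)))
      = (Prod.map (fun x => f₁.eval x) (fun x => f₂.eval x)) ∘
        (Equiv.mk (fun v : F × F => (v.1, v.1 + v.2)) (fun v => (v.1, v.2 - v.1))
          (fun v => by simp) (fun v => by simp)) := by
    funext v
    rfl
  rw [hshear, Equiv.bijective_comp]
  exact Prod.map_bijective
end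

section
/- Let q be a prime power and β ∈ GF(q²)\GF(q). For polynomials f₁, f₂ over GF(q), define F₃(z) = (β+1)·f₁((β^q z − β z^q)/(β^q − β)) + β·f₂((z^q − z)/(β^q − β)). Then F₃ is a permutation of GF(q²) if and only if both f₁ and f₂ are permutation polynomials of GF(q). -/
/-!
Since `{1, β}` is an `F`-basis of `E`, every `z : E` is `x + β y` with `x y : F`. The `q`-power
Frobenius fixes `F`, so `z ^ q = x + β ^ q y`, and the two arguments of `f₁, f₂` in `F₃(z)` are
exactly `x` and `y`. Thus `F₃(x + β y) = f₁ x + β (f₁ x + f₂ y)`: in these coordinates `F₃` is the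
shear `(u, v) ↦ (u, u + v)` composed with `f₁ × f₂`, which is bijective iff `f₁` and `f₂` are.
-/

open Polynomial

namespace FiniteField

variable {F E : Type*} [Field F] [Fintype F] [Field E] [Algebra F E]

theorem splits_X_pow_card_sub_X_self : (X ^ Fintype.card F - X : F[X]).Splits := by
  rw [splits_iff_card_roots, roots_X_pow_card_sub_X, X_pow_card_sub_X_natDegree_eq F
    Fintype.one_lt_card]
  rfl

theorem mem_range_algebraMap_of_pow_card_eq {x : E} (hx : x ^ Fintype.card F = x) :
    x ∈ Set.range (algebraMap F E) :=
  splits_X_pow_card_sub_X_self.mem_range_of_isRoot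
    (X_pow_card_sub_X_ne_zero F Fintype.one_lt_card) (by simp [hx])

theorem algebraMap_add_mul_pow_card (β : E) (x y : F) :
    (algebraMap F E x + β * algebraMap F E y) ^ Fintype.card F =
      algebraMap F E x + β ^ Fintype.card F * algebraMap F E y := by
  show frobeniusAlgHom F E _ = _
  rw [map_add, map_mul, AlgHom.commutes, AlgHom.commutes]
  rfl

theorem pow_card_sub_self_ne_zero (hβ : β ∉ Set.range (algebraMap F E)) :
    β ^ Fintype.card F - β ≠ 0 :=
  sub_ne_zero.2 fun h => hβ (mem_range_algebraMap_of_pow_card_eq h)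

theorem pow_card_mul_sub_mul_pow_card_div_eq (hβ : β ∉ Set.range (algebraMap F E)) (x y : F) :
    (β ^ Fintype.card F * (algebraMap F E x + β * algebraMap F E y) -
        β * (algebraMap F E x + β * algebraMap F E y) ^ Fintype.card F) /
      (β ^ Fintype.card F - β) = algebraMap F E x := by
  rw [algebraMap_add_mul_pow_card, div_eq_iff (pow_card_sub_self_ne_zero hβ)]
  ring

theorem pow_card_sub_div_eq (hβ : β ∉ Set.range (algebraMap F E)) (x y : F) :
    ((algebraMap F E x + β * algebraMap F E y) ^ Fintype.card F -
        (algebraMap F E x + β * algebraMap F E y)) /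
      (β ^ Fintype.card F - β) = algebraMap F E y := by
  rw [algebraMap_add_mul_pow_card, div_eq_iff (pow_card_sub_self_ne_zero hβ)]
  ring

end FiniteField

section Basis

variable {F E : Type*} [Field F] [Field E] [Algebra F E]

theorem injective_algebraMap_add_mul {β : E} (hβ : β ∉ Set.range (algebraMap F E)) :
    Function.Injective fun w : F × F => algebraMap F E w.1 + β * algebraMap F E w.2 := by
  rintro ⟨x₁, y₁⟩ ⟨x₂, y₂⟩ h
  simp only at h
  obtain rfl : y₁ = y₂ := by
    by_contra hy
    refine hβ ⟨(x₂ - x₁) / (y₁ - y₂), ?_⟩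
    have hy' : algebraMap F E (y₁ - y₂) ≠ 0 := by simpa [sub_eq_zero] using hy
    rw [map_div₀, div_eq_iff hy', map_sub, map_sub]
    linear_combination -h
  simpa using h

theorem bijective_algebraMap_add_mul [Finite F] (hdim : Module.finrank F E = 2) {β : E}
    (hβ : β ∉ Set.range (algebraMap F E)) :
    Function.Bijective fun w : F × F => algebraMap F E w.1 + β * algebraMap F E w.2 := by
  have : Module.Finite F E := Module.finite_of_finrank_eq_succ hdim
  have : Finite E := Module.finite_of_finite F
  refine (injective_algebraMap_add_mul hβ).bijective_of_nat_card_le ?_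
  rw [Module.natCard_eq_pow_finrank (K := F), hdim, Nat.card_prod, sq]

end Basis

theorem bijective_fst_add_iff {α β M : Type*} [AddGroup M] [Nonempty α] [Nonempty β]
    {f : α → M} {g : β → M} :
    Function.Bijective (fun w : α × β => (f w.1, f w.1 + g w.2)) ↔
      Function.Bijective f ∧ Function.Bijective g := by
  rw [← Prod.map_bijective,
    ← (Equiv.prodShear (Equiv.refl M) Equiv.addLeft).comp_bijective (Prod.map f g)]
  rfl

/-- the third recursive construction. -/
theorem stmt_13 {F E : Type*} [Field F] [Fintype F] [Field E] [Algebra F E]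
    (hdim : Module.finrank F E = 2)
    (β : E) (hβ : β ∉ Set.range (algebraMap F E))
    (f₁ f₂ : Polynomial F) :
    Function.Bijective (fun z : E =>
      (β + 1) * aeval ((β ^ Fintype.card F * z - β * z ^ Fintype.card F) /
          (β ^ Fintype.card F - β)) f₁ +
        β * aeval ((z ^ Fintype.card F - z) / (β ^ Fintype.card F - β)) f₂)
      ↔ (Function.Bijective (fun x : F => f₁.eval x) ∧
          Function.Bijective (fun x : F => f₂.eval x)) := by
  have hL := bijective_algebraMap_add_mul hdim hβ
  rw [← Function.Bijective.of_comp_iff _ hL, ← bijective_fst_add_iff, ← hL.of_comp_iff']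
  congr! 1
  funext ⟨x, y⟩
  simp only [Function.comp_apply, FiniteField.pow_card_mul_sub_mul_pow_card_div_eq hβ,
    FiniteField.pow_card_sub_div_eq hβ, aeval_algebraMap_apply_eq_algebraMap_eval, map_add]
  ring
end

section
/- Let q be a power of 2, β ∈ GF(q²)\GF(q), and f a permutation polynomial over GF(q). Define G on GF(q²) by: writing z = x + βy with x, y ∈ GF(q), G(z) = f(xy) + βy if y ≠ 0, and G(z) = x if y = 0. Then G is a permutation of GF(q²). -/
open scoped Classical
open Polynomial

/-- the fourth recursive construction (characteristic 2):
z = x + βy ↦ f(xy) + βy (y ≠ 0), x (y = 0), stated via the coordinate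
bijection F × F ≃ GF(q²). -/
theorem stmt_14 {F E : Type*} [Field F] [Fintype F] [CharP F 2] [Field E] [Algebra F E]
    (hdim : Module.finrank F E = 2)
    (β : E) (hβ : β ∉ Set.range (algebraMap F E))
    (f : Polynomial F) (hf : Function.Bijective fun x : F => f.eval x) :
    Function.Bijective fun p : F × F =>
      if p.2 = 0 then algebraMap F E p.1
      else algebraMap F E (f.eval (p.1 * p.2)) + p.2 • β := by
  have hinjF : Function.Injective (algebraMap F E) := (algebraMap F E).injective
  -- key linear independence fact
  have key : ∀ a b y y' : F, algebraMap F E a + y • β = algebraMap F E b + y' • β →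
      a = b ∧ y = y' := by
    intro a b y y' h
    by_cases hy : y = y'
    · subst hy
      exact ⟨hinjF (add_right_cancel h), rfl⟩
    · exfalso
      apply hβ
      have h2 : (y - y') • β = algebraMap F E (b - a) := by
        rw [sub_smul, map_sub]
        linear_combination h
      refine ⟨(y - y')⁻¹ * (b - a), ?_⟩
      have hyy : (y - y') ≠ 0 := sub_ne_zero.mpr hy
      rw [map_mul, ← Algebra.smul_def, ← h2, smul_smul, inv_mul_cancel₀ hyy, one_smul]
  have hinj : Function.Injective fun p : F × F =>
      if p.2 = 0 then algebraMap F E p.1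
      else algebraMap F E (f.eval (p.1 * p.2)) + p.2 • β := by
    rintro ⟨x1, y1⟩ ⟨x2, y2⟩ h
    simp only at h
    by_cases h1 : y1 = 0 <;> by_cases h2 : y2 = 0
    · subst h1; subst h2
      simp only [if_pos rfl] at h
      exact Prod.ext (hinjF h) rfl
    · rw [if_pos h1, if_neg h2] at h
      have := key x1 (f.eval (x2 * y2)) 0 y2 (by rw [zero_smul, add_zero]; exact h)
      exact absurd this.2.symm h2
    · rw [if_neg h1, if_pos h2] at h
      have := key (f.eval (x1 * y1)) x2 y1 0 (by rw [zero_smul, add_zero]; exact h)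
      exact absurd this.2 h1
    · rw [if_neg h1, if_neg h2] at h
      obtain ⟨he, hy⟩ := key _ _ _ _ h
      subst hy
      have hxy : x1 * y1 = x2 * y1 := hf.1 he
      have : x1 = x2 := mul_right_cancel₀ h1 hxy
      exact Prod.ext this rfl
  -- cardinality
  have hfd : FiniteDimensional F E := FiniteDimensional.of_finrank_pos (by omega)
  have : Finite E := Module.finite_of_finite F
  have : Fintype E := Fintype.ofFinite E
  refine (Fintype.bijective_iff_injective_and_card _).mpr ⟨hinj, ?_⟩
  rw [Fintype.card_prod, Module.card_eq_pow_finrank (K := F) (V := E), hdim, sq]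
end

section
/- Let q be an odd prime power, t a positive integer, and a, b, u ∈ GF(q). Then F(z) = az + bz^q + (z + z^q + u)^t is a permutation of GF(q²) if and only if a ≠ b and x ↦ (a+b)x + 2x^t is a permutation of GF(q). -/
/-!
Since `q` is odd, the Frobenius `z ↦ z ^ q` of the quadratic extension `E / F` has an
eigenvector `α` with eigenvalue `-1`, and `(x, y) ↦ x + y α` identifies `F × F` with `E`.
In these coordinates `z ^ q = x - y α`, so `z + z ^ q + u = 2 x + u` lies in `F` and the map
becomes the product of `x ↦ (a + b) x + (2 x + u) ^ t` and `y ↦ (a - b) y`. The first factor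
is conjugate to `x ↦ (a + b) x + 2 x ^ t` by affine bijections of `F`.
-/

open Function Module FiniteField

theorem Function.Semiconj.bijective_iff {α β : Type*} {f : α → β} {ga : α → α}
    {gb : β → β} (h : Semiconj f ga gb) (hf : Bijective f) : Bijective ga ↔ Bijective gb := by
  rw [← hf.of_comp_iff' ga, h.comp_eq, hf.of_comp_iff]

section AffineMaps

variable {K : Type*} [Field K]

theorem bijective_mul_left_iff {c : K} : Bijective (fun y : K => c * y) ↔ c ≠ 0 := by
  refine ⟨fun hc h0 => zero_ne_one (hc.injective (a₁ := 0) (a₂ := 1) (by simp [h0])),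
    fun hc => mulLeft_bijective₀ c hc⟩

theorem bijective_affine_comp_affine_iff {k m : K} (hk : k ≠ 0) (hm : m ≠ 0) (v w : K)
    (f : K → K) : Bijective (fun x => k * f (m * x + w) + v) ↔ Bijective f :=
  (((Equiv.mulLeft₀ k hk).trans (Equiv.addRight v)).bijective.of_comp_iff' _).trans
    (((Equiv.mulLeft₀ m hm).trans (Equiv.addRight w)).bijective.of_comp_iff f)

theorem bijective_mul_add_two_mul_add_pow_iff (h2 : (2 : K) ≠ 0) (s u : K) (t : ℕ) :
    Bijective (fun x => s * x + (2 * x + u) ^ t) ↔ Bijective (fun x => s * x + 2 * x ^ t) := by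
  rw [← bijective_affine_comp_affine_iff h2 (inv_ne_zero h2) (s * u) (-(2⁻¹ * u))]
  congr! 2 with x
  field_simp
  ring

end AffineMaps

theorem injective_algebraMap_add_mul_s15 {K L : Type*} [Field K] [Field L] [Algebra K L] {α : L}
    (hα : α ∉ Set.range (algebraMap K L)) :
    Injective fun p : K × K => algebraMap K L p.1 + algebraMap K L p.2 * α := by
  rintro ⟨x, y⟩ ⟨x', y'⟩ hxy
  dsimp only at hxy
  obtain rfl | hy := eq_or_ne y y'
  · simpa using hxy
  · refine absurd ⟨(x - x') / (y' - y), ?_⟩ hα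
    have : algebraMap K L (y' - y) ≠ 0 := by simpa [sub_eq_zero] using hy.symm
    rw [map_div₀, div_eq_iff this]
    simp only [map_sub]
    linear_combination hxy

theorem bijective_algebraMap_add_mul_s15 {K L : Type*} [Field K] [Field L] [Algebra K L] [Finite L]
    (hrank : finrank K L = 2) {α : L} (hα : α ∉ Set.range (algebraMap K L)) :
    Bijective fun p : K × K => algebraMap K L p.1 + algebraMap K L p.2 * α := by
  have : Module.Finite K L := Module.finite_of_finrank_eq_succ hrank
  refine (injective_algebraMap_add_mul_s15 hα).bijective_of_nat_card_le ?_
  rw [Module.natCard_eq_pow_finrank (K := K), hrank, Nat.card_prod, sq]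

section Frobenius

variable {F E : Type*} [Field F] [Fintype F] [Field E] [Algebra F E]

theorem frobeniusAlgHom_sq_eq_one [Finite E] (h : finrank F E = 2) :
    frobeniusAlgHom F E ^ 2 = 1 :=
  h ▸ orderOf_frobeniusAlgHom F E ▸ pow_orderOf_eq_one _

theorem frobeniusAlgHom_ne_one [Finite E] (h : finrank F E = 2) : frobeniusAlgHom F E ≠ 1 := by
  intro h1
  have := orderOf_frobeniusAlgHom F E
  rw [h1, orderOf_one, h] at this
  omega

theorem exists_ne_zero_pow_card_eq_neg [Finite E] (h : finrank F E = 2) :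
    ∃ α : E, α ≠ 0 ∧ α ^ Fintype.card F = -α := by
  set σ := frobeniusAlgHom F E
  obtain ⟨z, hz⟩ : ∃ z, σ z ≠ z := by
    by_contra! hσ
    exact frobeniusAlgHom_ne_one h (AlgHom.ext hσ)
  have hσσ : σ (σ z) = z := by
    have := AlgHom.congr_fun (frobeniusAlgHom_sq_eq_one h) z
    rwa [sq, AlgHom.mul_apply, AlgHom.one_apply] at this
  refine ⟨z - σ z, sub_ne_zero.2 hz.symm, ?_⟩
  rw [← frobeniusAlgHom_apply, map_sub, hσσ, neg_sub]

theorem notMem_range_algebraMap_of_pow_card_eq_neg (h2 : (2 : E) ≠ 0) {α : E} (hα0 : α ≠ 0)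
    (hα : α ^ Fintype.card F = -α) : α ∉ Set.range (algebraMap F E) := by
  rintro ⟨r, rfl⟩
  rw [← map_pow, pow_card, eq_neg_iff_add_eq_zero, ← two_mul] at hα
  exact mul_ne_zero h2 hα0 hα

theorem semiconj_algebraMap_add_mul {α : E} (hα : α ^ Fintype.card F = -α) (a b u : F)
    (t : ℕ) :
    Semiconj (fun p : F × F => algebraMap F E p.1 + algebraMap F E p.2 * α)
      (Prod.map (fun x => (a + b) * x + (2 * x + u) ^ t) fun y => (a - b) * y)
      fun z => algebraMap F E a * z + algebraMap F E b * z ^ Fintype.card F +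
        (z + z ^ Fintype.card F + algebraMap F E u) ^ t := by
  rintro ⟨x, y⟩
  have hconj : (algebraMap F E x + algebraMap F E y * α) ^ Fintype.card F =
      algebraMap F E x - algebraMap F E y * α := by
    rw [← frobeniusAlgHom_apply, map_add, map_mul, AlgHom.commutes, AlgHom.commutes,
      frobeniusAlgHom_apply, hα, mul_neg, sub_eq_add_neg]
  simp only [Prod.map_apply, hconj, map_add, map_mul, map_sub, map_pow, map_ofNat]
  ring

end Frobenius

theorem stmt_15_general {F E : Type*} [Field F] [Fintype F] [Field E] [Algebra F E]
    (hq : Odd (Fintype.card F)) (hdim : Module.finrank F E = 2)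
    (t : ℕ) (a b u : F) :
    Function.Bijective (fun z : E =>
      algebraMap F E a * z + algebraMap F E b * z ^ Fintype.card F +
        (z + z ^ Fintype.card F + algebraMap F E u) ^ t)
      ↔ (a ≠ b ∧ Function.Bijective fun x : F => (a + b) * x + 2 * x ^ t) := by
  have : Module.Finite F E := Module.finite_of_finrank_eq_succ hdim
  have : Finite E := Module.finite_of_finite F
  have h2F : (2 : F) ≠ 0 :=
    Ring.two_ne_zero fun h => by simpa [Nat.odd_iff.1 hq] using even_card_iff_char_two.1 h
  have h2E : (2 : E) ≠ 0 := by
    simpa only [map_ofNat] using (map_ne_zero (algebraMap F E)).2 h2F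
  obtain ⟨α, hα0, hα⟩ := exists_ne_zero_pow_card_eq_neg (F := F) hdim
  have hψ := bijective_algebraMap_add_mul_s15 hdim
    (notMem_range_algebraMap_of_pow_card_eq_neg h2E hα0 hα)
  rw [← (semiconj_algebraMap_add_mul hα a b u t).bijective_iff hψ, Prod.map_bijective,
    bijective_mul_left_iff, sub_ne_zero, bijective_mul_add_two_mul_add_pow_iff h2F, and_comm]

/-- az + bz^q + (z + z^q + u)^t. -/
theorem stmt_15 {F E : Type*} [Field F] [Fintype F] [Field E] [Fintype E] [Algebra F E]
    (hq : Odd (Fintype.card F)) (hdim : Module.finrank F E = 2)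
    (t : ℕ) (ht : 0 < t) (a b u : F) :
    Function.Bijective (fun z : E =>
      algebraMap F E a * z + algebraMap F E b * z ^ Fintype.card F +
        (z + z ^ Fintype.card F + algebraMap F E u) ^ t)
      ↔ (a ≠ b ∧ Function.Bijective fun x : F => (a + b) * x + 2 * x ^ t) :=
  stmt_15_general hq hdim t a b u
end

section
/- Let q be an odd prime power, t an even positive integer, α ∈ GF(q²)\GF(q) with α^q = −α, and a, b, u ∈ GF(q). Then F₁(z) = az + bz^q + (z − z^q + uα)^t is a permutation of GF(q²) if and only if a² ≠ b². -/
open Polynomial in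
/-- Fixed points of the `q`-power map lie in the base field. -/
lemma fixed_mem_range {F E : Type*} [Field F] [Fintype F] [Field E] [Fintype E] [Algebra F E]
    {w : E} (hw : w ^ Fintype.card F = w) : w ∈ Set.range (algebraMap F E) := by
  classical
  set q := Fintype.card F with hq
  have hq1 : 1 < q := Fintype.one_lt_card
  set p : E[X] := X ^ q - X with hp
  have hdeg : p.degree = (q : ℕ) := by
    rw [hp]
    rw [Polynomial.degree_sub_eq_left_of_degree_lt, Polynomial.degree_X_pow]
    rw [Polynomial.degree_X_pow, Polynomial.degree_X]
    exact_mod_cast hq1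
  have hp0 : p ≠ 0 := by
    intro h
    rw [h, Polynomial.degree_zero] at hdeg
    exact absurd hdeg (by simp)
  have hroot : ∀ x : F, p.IsRoot (algebraMap F E x) := by
    intro x
    simp only [hp, Polynomial.IsRoot, Polynomial.eval_sub, Polynomial.eval_pow,
      Polynomial.eval_X]
    rw [← map_pow, FiniteField.pow_card, sub_self]
  set A : Finset E := Finset.univ.image (algebraMap F E) with hA
  have hcardA : A.card = q := by
    rw [hA, Finset.card_image_of_injective _ (algebraMap F E).injective, Finset.card_univ]
  have hsub : A ⊆ p.roots.toFinset := by
    intro z hz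
    rw [hA, Finset.mem_image] at hz
    obtain ⟨x, -, rfl⟩ := hz
    rw [Multiset.mem_toFinset, Polynomial.mem_roots hp0]
    exact hroot x
  have hcardR : p.roots.toFinset.card ≤ q := by
    calc p.roots.toFinset.card ≤ Multiset.card p.roots := p.roots.toFinset_card_le
      _ ≤ p.natDegree := p.card_roots'
      _ = q := Polynomial.natDegree_eq_of_degree_eq_some hdeg
  have heq : A = p.roots.toFinset :=
    Finset.eq_of_subset_of_card_le hsub (by rw [hcardA]; exact hcardR)
  have hwmem : w ∈ p.roots.toFinset := by
    rw [Multiset.mem_toFinset, Polynomial.mem_roots hp0]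
    simp only [hp, Polynomial.IsRoot, Polynomial.eval_sub, Polynomial.eval_pow,
      Polynomial.eval_X]
    rw [hw, sub_self]
  rw [← heq, hA, Finset.mem_image] at hwmem
  obtain ⟨x, -, hx⟩ := hwmem
  exact ⟨x, hx⟩

/-- az + bz^q + (z − z^q + uα)^t, t even. -/
theorem stmt_16 {F E : Type*} [Field F] [Fintype F] [Field E] [Fintype E] [Algebra F E]
    (hq : Odd (Fintype.card F)) (hdim : Module.finrank F E = 2)
    (α : E) (hα : α ∉ Set.range (algebraMap F E)) (hαq : α ^ Fintype.card F = -α)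
    (t : ℕ) (ht : 0 < t) (hte : Even t) (a b u : F) :
    Function.Bijective (fun z : E =>
      algebraMap F E a * z + algebraMap F E b * z ^ Fintype.card F +
        (z - z ^ Fintype.card F + algebraMap F E u * α) ^ t)
      ↔ a ^ 2 ≠ b ^ 2 := by
  classical
  set e : F →+* E := algebraMap F E with he
  have heinj : Function.Injective e := e.injective
  set Q := Fintype.card F with hQ
  -- characteristic facts
  obtain ⟨p, hpc⟩ := CharP.exists F
  haveI : CharP F p := hpc
  haveI hpE : CharP E p := charP_of_injective_algebraMap heinj p
  obtain ⟨n, hpprime, hcard⟩ := FiniteField.card F p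
  haveI : Fact p.Prime := ⟨hpprime⟩
  -- 2 ≠ 0 in F
  have h2 : (2 : F) ≠ 0 := by
    intro h2
    have hp2 : p = 2 := by
      have hdvd : p ∣ 2 := (CharP.cast_eq_zero_iff F p 2).mp (by exact_mod_cast h2)
      exact (Nat.prime_dvd_prime_iff_eq hpprime Nat.prime_two).mp hdvd
    rw [hQ, hcard, hp2] at hq
    exact (Nat.not_odd_iff_even.mpr (Nat.even_pow.mpr ⟨even_two, n.pos.ne'⟩)) hq
  -- Frobenius is additive
  have hfrob_add : ∀ x y : E, (x + y) ^ Q = x ^ Q + y ^ Q := by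
    intro x y
    rw [hQ, hcard]
    exact add_pow_char_pow x y p n
  -- e x is fixed by Frobenius
  have hfix : ∀ x : F, (e x) ^ Q = e x := by
    intro x
    rw [← map_pow, FiniteField.pow_card]
  -- α² comes from F
  have hα2 : (α ^ 2) ^ Q = α ^ 2 := by
    rw [← pow_mul, mul_comm, pow_mul, hαq, neg_pow, Even.neg_one_pow even_two, one_mul]
  obtain ⟨c, hc⟩ := fixed_mem_range (F := F) (E := E) hα2
  obtain ⟨s, hs⟩ := id hte
  -- α ^ t = e (c ^ s)
  have hαt : α ^ t = e (c ^ s) := by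
    rw [map_pow, hc, ← pow_mul, hs, two_mul]
  -- Frobenius on coordinates
  have hfrob : ∀ x y : F, (e x + e y * α) ^ Q = e x - e y * α := by
    intro x y
    rw [hfrob_add, hfix, mul_pow, hfix, hαq, mul_neg, ← sub_eq_add_neg]
  -- the coordinate map β
  set β : F × F → E := fun w => e w.1 + e w.2 * α with hβdef
  have hβinj : Function.Injective β := by
    rintro ⟨x₁, y₁⟩ ⟨x₂, y₂⟩ hxy
    simp only [hβdef] at hxy
    have hyeq : y₁ = y₂ := by
      by_contra hy
      apply hα
      have hne : e y₂ - e y₁ ≠ 0 := by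
        rw [← map_sub]
        intro h
        exact hy (sub_eq_zero.mp (heinj (h.trans (map_zero e).symm))).symm
      refine ⟨(x₁ - x₂) / (y₂ - y₁), ?_⟩
      rw [map_div₀, map_sub, map_sub, div_eq_iff hne]
      linear_combination hxy
    subst hyeq
    have hx : e x₁ = e x₂ := by linear_combination hxy
    exact Prod.ext (heinj hx) rfl
  have hcardE : Fintype.card E = Fintype.card (F × F) := by
    rw [Module.card_eq_pow_finrank (K := F) (V := E), hdim, Fintype.card_prod]
    ring
  have hβbij : Function.Bijective β := by
    rw [Fintype.bijective_iff_injective_and_card]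
    exact ⟨hβinj, hcardE.symm⟩
  -- the coordinate form of the map
  set g : F × F → F × F := fun w =>
    ((a + b) * w.1 + (2 * w.2 + u) ^ t * c ^ s, (a - b) * w.2) with hgdef
  set Φ : E → E := fun z => e a * z + e b * z ^ Q +
      (z - z ^ Q + e u * α) ^ t with hΦdef
  have hkey : ∀ w : F × F, Φ (β w) = β (g w) := by
    rintro ⟨x, y⟩
    simp only [hΦdef, hβdef, hgdef, hfrob]
    have hinner : e x + e y * α - (e x - e y * α) + e u * α = e (2 * y + u) * α := by
      rw [map_add, map_mul, map_ofNat]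
      ring
    rw [hinner, mul_pow, hαt, ← map_pow, ← map_mul]
    simp only [map_add, map_mul, map_sub, map_pow]
    ring
  have hcomp : Φ ∘ β = β ∘ g := funext hkey
  have hstep : Function.Bijective Φ ↔ Function.Bijective g := by
    constructor
    · intro h
      have : Function.Bijective (β ∘ g) := hcomp ▸ h.comp hβbij
      exact (Function.Bijective.of_comp_iff' hβbij g).mp this
    · intro h
      have : Function.Bijective (Φ ∘ β) := hcomp ▸ hβbij.comp h
      exact (Function.Bijective.of_comp_iff Φ hβbij).mp this
  have hiff : a ^ 2 ≠ b ^ 2 ↔ (a + b ≠ 0 ∧ a - b ≠ 0) := by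
    rw [← sub_ne_zero, show a ^ 2 - b ^ 2 = (a + b) * (a - b) by ring, mul_ne_zero_iff]
  show Function.Bijective Φ ↔ a ^ 2 ≠ b ^ 2
  rw [hstep, hiff]
  constructor
  · intro hbij
    constructor
    · intro hab
      have := hbij.injective (a₁ := (0, 0)) (a₂ := (1, 0)) (by
        simp only [hgdef, hab]; norm_num)
      simpa using congrArg Prod.fst this
    · intro hab
      by_cases hu : u = 0
      · have key : ((2 : F) * (-1) + u) ^ t = (2 * 1 + u) ^ t := by
          rw [hu, show (2 : F) * (-1) + 0 = -(2 * 1 + 0) by ring, Even.neg_pow hte]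
        have := hbij.injective (a₁ := ((0 : F), (1 : F))) (a₂ := (0, -1)) (by
          simp only [hgdef]
          rw [key, hab]
          norm_num)
        have h1 : (1 : F) = -1 := congrArg Prod.snd this
        exact h2 (by linear_combination h1)
      · have key : ((2 : F) * (-u) + u) ^ t = (2 * 0 + u) ^ t := by
          rw [show (2 : F) * (-u) + u = -(2 * 0 + u) by ring, Even.neg_pow hte]
        have := hbij.injective (a₁ := ((0 : F), (0 : F))) (a₂ := (0, -u)) (by
          simp only [hgdef]
          rw [key, hab]
          norm_num)
        have h1 : (0 : F) = -u := congrArg Prod.snd this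
        exact hu (by linear_combination h1)
  · rintro ⟨h1, h2⟩
    rw [Fintype.bijective_iff_injective_and_card]
    refine ⟨?_, rfl⟩
    rintro ⟨x₁, y₁⟩ ⟨x₂, y₂⟩ hxy
    simp only [hgdef, Prod.mk.injEq] at hxy
    obtain ⟨hx, hy⟩ := hxy
    have hy' : y₁ = y₂ := mul_left_cancel₀ h2 hy
    subst hy'
    have hx' : x₁ = x₂ := mul_left_cancel₀ h1 (add_right_cancel hx)
    rw [hx']
end

section
/- Let q be an odd prime power, t an odd positive integer, α ∈ GF(q²)\GF(q) with α^q = −α, and a, b, u ∈ GF(q). Then F₁(z) = az + bz^q + (z − z^q + uα)^t is a permutation of GF(q²) if and only if a + b ≠ 0 and x ↦ (a−b)x + 2α^{t−1}x^t is a permutation of GF(q). -/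
section Aux

variable {K : Type*} [Field K]

private lemma aux_mul_bij (m : K) (hm : m ≠ 0) : Function.Bijective (fun x : K => m * x) :=
  mulLeft_bijective₀ m hm

private lemma aux_affine_bij (m w : K) (hm : m ≠ 0) :
    Function.Bijective (fun x : K => m * x + w) := by
  have h1 : (fun x : K => m * x + w) = (fun y : K => y + w) ∘ (fun x : K => m * x) := rfl
  rw [h1]
  exact (Equiv.addRight w).bijective.comp (aux_mul_bij m hm)

private lemma aux_mul_bij_iff (m : K) : Function.Bijective (fun x : K => m * x) ↔ m ≠ 0 := by
  constructor
  · rintro h rfl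
    have := h.1 (a₁ := (0:K)) (a₂ := (1:K)) (by simp)
    simp at this
  · exact aux_mul_bij m

private lemma aux_prod_bij {A B C D : Type*} [Nonempty A] [Nonempty B]
    (f : A → C) (g : B → D) :
    Function.Bijective (Prod.map f g) ↔ Function.Bijective f ∧ Function.Bijective g := by
  constructor
  · intro h
    obtain ⟨a0⟩ := ‹Nonempty A›; obtain ⟨b0⟩ := ‹Nonempty B›
    refine ⟨⟨?_, ?_⟩, ⟨?_, ?_⟩⟩
    · intro x y hxy
      have := h.1 (a₁ := (x, b0)) (a₂ := (y, b0)) (by simp [Prod.map, hxy])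
      exact ((Prod.mk.injEq _ _ _ _).mp this).1
    · intro cv
      obtain ⟨⟨x, y⟩, hxy⟩ := h.2 (cv, g b0)
      exact ⟨x, congrArg Prod.fst hxy⟩
    · intro x y hxy
      have := h.1 (a₁ := (a0, x)) (a₂ := (a0, y)) (by simp [Prod.map, hxy])
      exact ((Prod.mk.injEq _ _ _ _).mp this).2
    · intro dv
      obtain ⟨⟨x, y⟩, hxy⟩ := h.2 (f a0, dv)
      exact ⟨y, congrArg Prod.snd hxy⟩
  · rintro ⟨hf, hg⟩
    exact hf.prodMap hg

end Aux

/-- az + bz^q + (z − z^q + uα)^t, t odd; here c ∈ GF(q) is the element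
with algebraMap c = α^{t-1} (α^{t-1} ∈ GF(q) since t is odd). -/
theorem stmt_17 {F E : Type*} [Field F] [Fintype F] [Field E] [Fintype E] [Algebra F E]
    (hq : Odd (Fintype.card F)) (hdim : Module.finrank F E = 2)
    (α : E) (hα : α ∉ Set.range (algebraMap F E)) (hαq : α ^ Fintype.card F = -α)
    (t : ℕ) (ht : 0 < t) (hto : Odd t) (a b u : F)
    (c : F) (hc : algebraMap F E c = α ^ (t - 1)) :
    Function.Bijective (fun z : E =>
      algebraMap F E a * z + algebraMap F E b * z ^ Fintype.card F +
        (z - z ^ Fintype.card F + algebraMap F E u * α) ^ t)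
      ↔ (a + b ≠ 0 ∧ Function.Bijective fun x : F => (a - b) * x + 2 * c * x ^ t) := by
  classical
  have einj : Function.Injective (algebraMap F E) := (algebraMap F E).injective
  set p := ringChar F with hpdef
  haveI : CharP F p := ringChar.charP F
  have hp : p.Prime := CharP.char_is_prime F p
  haveI : Fact p.Prime := ⟨hp⟩
  obtain ⟨n, -, hcard⟩ := FiniteField.card F p
  haveI : CharP E p := charP_of_injective_algebraMap einj p
  -- Frobenius is additive
  have hfrob : ∀ z w : E, (z + w) ^ Fintype.card F = z ^ Fintype.card F + w ^ Fintype.card F := by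
    intro z w; rw [hcard]; exact add_pow_char_pow z w p n
  have hselfpow : ∀ s : F, (algebraMap F E s) ^ Fintype.card F = algebraMap F E s := by
    intro s; rw [← map_pow, FiniteField.pow_card]
  have two_ne : (2 : F) ≠ 0 := by
    intro h2
    have hd : p ∣ 2 := (CharP.cast_eq_zero_iff F p 2).mp (by exact_mod_cast h2)
    have hp2 : p = 2 := ((Nat.prime_dvd_prime_iff_eq hp Nat.prime_two).mp hd)
    rw [hcard, hp2] at hq
    exact (Nat.not_odd_iff_even.mpr (Nat.even_pow.mpr ⟨even_two, n.pos.ne'⟩)) hq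
  -- the coordinate map φ : F × F → E
  set φ : F × F → E := fun xy => algebraMap F E xy.1 + algebraMap F E xy.2 * α with hφdef
  have hφinj : Function.Injective φ := by
    rintro ⟨x₁, y₁⟩ ⟨x₂, y₂⟩ h
    simp only [hφdef] at h
    by_cases hy : y₁ = y₂
    · subst hy
      have : algebraMap F E x₁ = algebraMap F E x₂ := by
        have := h; linear_combination (norm := ring_nf) this
      exact Prod.ext (einj this) rfl
    · exfalso
      apply hα
      have hyne : algebraMap F E (y₂ - y₁) ≠ 0 := fun h0 =>
        hy (by have := einj (h0.trans (map_zero _).symm); exact (sub_eq_zero.mp this).symm)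
      refine ⟨(x₁ - x₂) / (y₂ - y₁), ?_⟩
      rw [map_div₀]
      rw [div_eq_iff hyne]
      rw [map_sub, map_sub]
      linear_combination h
  have hφbij : Function.Bijective φ := by
    rw [Fintype.bijective_iff_injective_and_card]
    refine ⟨hφinj, ?_⟩
    rw [Fintype.card_prod, Module.card_eq_pow_finrank (K := F) (V := E), hdim, sq]
  -- α ^ t = c • α
  have hαt : α ^ t = algebraMap F E c * α := by
    conv_lhs => rw [← Nat.succ_pred_eq_of_pos ht]
    rw [pow_succ, hc]
    rfl
  -- the key computation
  set g : F → F := fun y => (a - b) * y + c * (2 * y + u) ^ t with hgdef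
  have key : ∀ x y : F,
      (fun z : E =>
        algebraMap F E a * z + algebraMap F E b * z ^ Fintype.card F +
          (z - z ^ Fintype.card F + algebraMap F E u * α) ^ t) (φ (x, y))
        = φ ((a + b) * x, g y) := by
    intro x y
    simp only [hφdef, hgdef]
    have hzq : (algebraMap F E x + algebraMap F E y * α) ^ Fintype.card F
        = algebraMap F E x - algebraMap F E y * α := by
      rw [hfrob, mul_pow, hselfpow, hselfpow, hαq]; ring
    rw [hzq]
    have h1 : algebraMap F E x + algebraMap F E y * α -
        (algebraMap F E x - algebraMap F E y * α) + algebraMap F E u * α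
        = algebraMap F E (2 * y + u) * α := by
      simp only [map_add, map_mul, map_ofNat]; ring
    rw [h1, mul_pow, ← map_pow, hαt]
    simp only [map_add, map_mul, map_sub]
    ring
  -- transport bijectivity through φ
  have hcomp : (fun z : E =>
      algebraMap F E a * z + algebraMap F E b * z ^ Fintype.card F +
        (z - z ^ Fintype.card F + algebraMap F E u * α) ^ t) ∘ φ
      = φ ∘ Prod.map (fun x : F => (a + b) * x) g := by
    funext xy
    exact (key xy.1 xy.2).trans rfl
  have φe : (F × F) ≃ E := Equiv.ofBijective φ hφbij
  have main : Function.Bijective (fun z : E =>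
      algebraMap F E a * z + algebraMap F E b * z ^ Fintype.card F +
        (z - z ^ Fintype.card F + algebraMap F E u * α) ^ t)
      ↔ Function.Bijective (Prod.map (fun x : F => (a + b) * x) g) := by
    rw [← Equiv.bijective_comp (Equiv.ofBijective φ hφbij)]
    show Function.Bijective (_ ∘ φ) ↔ _
    rw [hcomp]
    exact Equiv.comp_bijective _ (Equiv.ofBijective φ hφbij)
  rw [main, aux_prod_bij, aux_mul_bij_iff]
  -- finally, g is bijective iff h is bijective
  have hgeq : g = (fun w : F => 2⁻¹ * w + -(2⁻¹ * (a - b) * u)) ∘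
      (fun x : F => (a - b) * x + 2 * c * x ^ t) ∘ (fun y : F => 2 * y + u) := by
    funext y
    simp only [hgdef, Function.comp_apply]
    field_simp
    ring
  constructor
  · rintro ⟨h1, h2⟩
    refine ⟨h1, ?_⟩
    rw [hgeq] at h2
    have hA := aux_affine_bij (2⁻¹ : F) (-(2⁻¹ * (a - b) * u)) (inv_ne_zero two_ne)
    have hB := aux_affine_bij (2 : F) u two_ne
    have := (Equiv.comp_bijective _ (Equiv.ofBijective _ hA)).mp h2
    exact (Equiv.bijective_comp (Equiv.ofBijective _ hB) _).mp this
  · rintro ⟨h1, h2⟩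
    refine ⟨h1, ?_⟩
    rw [hgeq]
    have hA := aux_affine_bij (2⁻¹ : F) (-(2⁻¹ * (a - b) * u)) (inv_ne_zero two_ne)
    have hB := aux_affine_bij (2 : F) u two_ne
    exact hA.comp (h2.comp hB)
end

section
/- Let q be a prime power with q ≡ 1 (mod 3), α ∈ GF(q³)\GF(q) with α³ ∈ GF(q), ω = α^{q−1} ∈ GF(q) a primitive cube root of unity, t a positive integer, and a, b, c, u ∈ GF(q). Then F(x) = ax + bx^q + cx^{q²} + (x + x^q + x^{q²} + u)^t is a permutation of GF(q³) if and only if (a + bω + cω²)(a + bω² + cω) ≠ 0 and y ↦ (a+b+c)y + 3y^t is a permutation of GF(q). -/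
open Polynomial in
private lemma frob_fixed_mem {F E : Type*} [Field F] [Fintype F] [Field E] [Fintype E]
    [Algebra F E] {x : E} (hx : x ^ Fintype.card F = x) :
    x ∈ Set.range (algebraMap F E) := by
  classical
  have h2 : 1 < Fintype.card F := Fintype.one_lt_card
  set q := Fintype.card F with hq
  have hne : (X ^ q - X : Polynomial E) ≠ 0 := FiniteField.X_pow_card_sub_X_ne_zero E h2
  set S : Finset E := Finset.univ.filter (fun z => z ^ q = z) with hS
  have hsub : S ⊆ (X ^ q - X : Polynomial E).roots.toFinset := by
    intro z hz
    rw [Multiset.mem_toFinset, Polynomial.mem_roots hne]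
    simp only [hS, Finset.mem_filter] at hz
    simp [Polynomial.IsRoot, sub_eq_zero, hz.2]
  have hcard : S.card ≤ q := by
    calc S.card ≤ _ := Finset.card_le_card hsub
    _ ≤ Multiset.card (X ^ q - X : Polynomial E).roots :=
        (X ^ q - X : Polynomial E).roots.toFinset_card_le
    _ ≤ (X ^ q - X : Polynomial E).natDegree := Polynomial.card_roots' _
    _ = q := FiniteField.X_pow_card_sub_X_natDegree_eq E h2
  have himg : Finset.univ.image (algebraMap F E) ⊆ S := by
    intro z hz
    simp only [Finset.mem_image] at hz
    obtain ⟨s, _, rfl⟩ := hz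
    simp only [hS, Finset.mem_filter]
    exact ⟨Finset.mem_univ _, by rw [← map_pow, FiniteField.pow_card]⟩
  have hcardimg : (Finset.univ.image (algebraMap F E)).card = q := by
    rw [Finset.card_image_of_injective _ (algebraMap F E).injective, Finset.card_univ]
  have heq : Finset.univ.image (algebraMap F E) = S :=
    Finset.eq_of_subset_of_card_le himg (by rw [hcardimg]; exact hcard)
  have hxS : x ∈ S := by simp only [hS, Finset.mem_filter]; exact ⟨Finset.mem_univ _, hx⟩
  rw [← heq] at hxS
  simp only [Finset.mem_image] at hxS
  obtain ⟨s, _, hs⟩ := hxS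
  exact ⟨s, hs⟩

/-- ax + bx^q + cx^{q²} + (x + x^q + x^{q²} + u)^t over GF(q³), q ≡ 1 (mod 3). -/
theorem stmt_18 {F E : Type*} [Field F] [Fintype F] [Field E] [Fintype E] [Algebra F E]
    (hq : Fintype.card F % 3 = 1) (hdim : Module.finrank F E = 3)
    (α : E) (hα : α ∉ Set.range (algebraMap F E))
    (hα3 : α ^ 3 ∈ Set.range (algebraMap F E))
    (ω : F) (hω : algebraMap F E ω = α ^ (Fintype.card F - 1))
    (hω3 : ω ^ 3 = 1) (hω1 : ω ≠ 1)
    (t : ℕ) (ht : 0 < t) (a b c u : F) :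
    Function.Bijective (fun x : E =>
      algebraMap F E a * x + algebraMap F E b * x ^ Fintype.card F +
        algebraMap F E c * x ^ Fintype.card F ^ 2 +
        (x + x ^ Fintype.card F + x ^ Fintype.card F ^ 2 + algebraMap F E u) ^ t)
      ↔ ((a + b * ω + c * ω ^ 2) * (a + b * ω ^ 2 + c * ω) ≠ 0 ∧
          Function.Bijective fun y : F => (a + b + c) * y + 3 * y ^ t) := by
  classical
  obtain ⟨p, hpchar⟩ := CharP.exists F
  haveI := hpchar
  obtain ⟨n, hpp, hcard⟩ := FiniteField.card F p
  haveI : Fact p.Prime := ⟨hpp⟩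
  haveI : CharP E p := charP_of_injective_algebraMap (algebraMap F E).injective p
  haveI : ExpChar E p := ExpChar.prime hpp
  set q := Fintype.card F with hqdef
  have hq1 : 0 < q := Fintype.card_pos
  set f := algebraMap F E with hfdef
  have hfinj : Function.Injective f := f.injective
  set φ : E →+* E := iterateFrobenius E p (n : ℕ) with hφdef
  have hφq : ∀ x : E, φ x = x ^ q := fun x => by
    rw [hφdef, iterateFrobenius_def, ← hcard]
  -- basic arithmetic facts
  have h3F : (3 : F) ≠ 0 := by
    intro h3
    have h0 : ((q : ℕ) : F) = 0 := Nat.cast_card_eq_zero F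
    have hdm := Nat.div_add_mod q 3
    rw [hq] at hdm
    have hcast : ((3 * (q / 3) + 1 : ℕ) : F) = 0 := by rw [hdm]; exact h0
    push_cast at hcast
    rw [h3] at hcast
    simp at hcast
  have h3E : (3 : E) ≠ 0 := by
    intro h
    apply h3F
    apply hfinj
    rw [map_ofNat, map_zero, h]
  have hωsum : 1 + ω + ω ^ 2 = 0 := by
    have hfac : (ω - 1) * (ω ^ 2 + ω + 1) = 0 := by linear_combination hω3
    rcases mul_eq_zero.mp hfac with h | h
    · exact absurd (sub_eq_zero.mp h) hω1
    · linear_combination h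
  set ω' := f ω with hω'def
  have hω'3 : ω' ^ 3 = 1 := by rw [hω'def, ← map_pow, hω3, map_one]
  have hω'sum : 1 + ω' + ω' ^ 2 = 0 := by
    rw [hω'def]
    have : f (1 + ω + ω ^ 2) = 0 := by rw [hωsum, map_zero]
    rw [map_add, map_add, map_one, map_pow] at this
    exact this
  -- frobenius facts
  have hφf : ∀ s : F, φ (f s) = f s := fun s => by
    rw [hφq, ← map_pow, FiniteField.pow_card]
  have hcardE : Fintype.card E = q ^ 3 := by
    rw [Module.card_eq_pow_finrank (K := F) (V := E), hdim]
  have hφ3 : ∀ x : E, φ (φ (φ x)) = x := fun x => by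
    rw [hφq, hφq, hφq, ← pow_mul, ← pow_mul]
    have hqqq : q * (q * q) = Fintype.card E := by rw [hcardE]; ring
    rw [hqqq, FiniteField.pow_card]
  -- α facts
  have hα0 : α ≠ 0 := fun h => hα ⟨0, by rw [map_zero, h]⟩
  have hαq : φ α = ω' * α := by
    rw [hφq, hω, ← pow_succ]
    congr 1
    omega
  have hαq2 : φ (φ α) = ω' ^ 2 * α := by
    rw [hαq, map_mul, hφf, hαq]; ring
  -- the trace map
  have hTmem : ∀ x : E, ∃ s : F, f s = x + φ x + φ (φ x) := by
    intro x
    apply frob_fixed_mem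
    rw [← hφq, map_add, map_add, hφ3]
    ring
  choose τ hτ using hTmem
  have hτfs : ∀ s : F, τ (f s) = 3 * s := by
    intro s
    apply hfinj
    rw [hτ (f s), hφf s, hφf s, map_mul, map_ofNat]
    ring
  -- the function under study
  set Ffun : E → E := fun x =>
    f a * x + f b * φ x + f c * φ (φ x) + (x + φ x + φ (φ x) + f u) ^ t with hFdef
  have hgoalfun : (fun x : E => f a * x + f b * x ^ q + f c * x ^ q ^ 2 +
      (x + x ^ q + x ^ q ^ 2 + f u) ^ t) = Ffun := by
    funext x
    have h2 : φ (φ x) = x ^ q ^ 2 := by rw [hφq, hφq, ← pow_mul, ← pow_two]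
    rw [hFdef]
    rw [← hφq x, ← h2]
  rw [hgoalfun]
  -- trace compatibility
  have hτF : ∀ x : E, τ (Ffun x) = (a + b + c) * τ x + 3 * (τ x + u) ^ t := by
    intro x
    apply hfinj
    rw [hτ (Ffun x)]
    have hy3 : φ (φ (φ x)) = x := hφ3 x
    have hw : f (τ x + u) = x + φ x + φ (φ x) + f u := by rw [map_add, hτ]
    have hφw : φ (f (τ x + u)) = f (τ x + u) := hφf _
    have hFx : Ffun x = f a * x + f b * φ x + f c * φ (φ x) + f (τ x + u) ^ t := by
      rw [hFdef, hw]
    have hφF : φ (Ffun x) = f a * φ x + f b * φ (φ x) + f c * x + f (τ x + u) ^ t := by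
      rw [hFx, map_add, map_add, map_add, map_mul, map_mul, map_mul, map_pow,
        hφf a, hφf b, hφf c, hφw, hy3]
    have hφφF : φ (φ (Ffun x)) = f a * φ (φ x) + f b * x + f c * φ x + f (τ x + u) ^ t := by
      rw [hφF, map_add, map_add, map_add, map_mul, map_mul, map_mul, map_pow,
        hφf a, hφf b, hφf c, hφw, hy3]
    rw [hφφF, hφF, hFx]
    simp only [map_add, map_mul, map_pow, map_ofNat]
    rw [hτ]
    ring
  -- the key kernel lemma
  have hkey : (a + b * ω + c * ω ^ 2) ≠ 0 → (a + b * ω ^ 2 + c * ω) ≠ 0 → ∀ x : E,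
      x + φ x + φ (φ x) = 0 → f a * x + f b * φ x + f c * φ (φ x) = 0 → x = 0 := by
    intro h1 h2 x hT hL
    have hy3 : φ (φ (φ x)) = x := hφ3 x
    have hL1 : f a * φ x + f b * φ (φ x) + f c * x = 0 := by
      have h := congrArg φ hL
      rw [map_add, map_add, map_mul, map_mul, map_mul, map_zero,
        hφf a, hφf b, hφf c, hy3] at h
      exact h
    have hL2 : f a * φ (φ x) + f b * x + f c * φ x = 0 := by
      have h := congrArg φ hL1
      rw [map_add, map_add, map_mul, map_mul, map_mul, map_zero,
        hφf a, hφf b, hφf c, hy3] at h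
      exact h
    have hlam1 : f (a + b * ω + c * ω ^ 2) ≠ 0 := fun h => h1 (hfinj (by rw [h, map_zero]))
    have hlam2 : f (a + b * ω ^ 2 + c * ω) ≠ 0 := fun h => h2 (hfinj (by rw [h, map_zero]))
    have hflam1 : f (a + b * ω + c * ω ^ 2) = f a + f b * ω' + f c * ω' ^ 2 := by
      rw [map_add, map_add, map_mul, map_mul, map_pow, hω'def]
    have hflam2 : f (a + b * ω ^ 2 + c * ω) = f a + f b * ω' ^ 2 + f c * ω' := by
      rw [map_add, map_add, map_mul, map_mul, map_pow, hω'def]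
    have hu1 : f (a + b * ω + c * ω ^ 2) * (x + ω' ^ 2 * φ x + ω' * φ (φ x)) = 0 := by
      rw [hflam1]
      linear_combination hL + ω' ^ 2 * hL1 + ω' * hL2 +
        ((f b + f c * ω') * φ x + f c * φ (φ x)) * hω'3
    have hu2 : f (a + b * ω ^ 2 + c * ω) * (x + ω' * φ x + ω' ^ 2 * φ (φ x)) = 0 := by
      rw [hflam2]
      linear_combination hL + ω' * hL1 + ω' ^ 2 * hL2 +
        (f b * φ x + (f b * ω' + f c) * φ (φ x)) * hω'3
    have hU1 : x + ω' ^ 2 * φ x + ω' * φ (φ x) = 0 := by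
      rcases mul_eq_zero.mp hu1 with h | h
      · exact absurd h hlam1
      · exact h
    have hU2 : x + ω' * φ x + ω' ^ 2 * φ (φ x) = 0 := by
      rcases mul_eq_zero.mp hu2 with h | h
      · exact absurd h hlam2
      · exact h
    have h3x : (3 : E) * x = 0 := by
      linear_combination hU1 + hU2 + hT - (φ x + φ (φ x)) * hω'sum
    rcases mul_eq_zero.mp h3x with h | h
    · exact absurd h h3E
    · exact h
  constructor
  · rintro ⟨hinj, hsurj⟩
    have hF0 : Ffun 0 = f u ^ t := by
      rw [hFdef]
      simp
    constructor
    · refine mul_ne_zero ?_ ?_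
      · intro h1
        apply hα0
        apply hinj
        have hTα : α + φ α + φ (φ α) = 0 := by
          rw [hαq2, hαq]
          linear_combination α * hω'sum
        have hFα : Ffun α = f u ^ t := by
          rw [hFdef]
          show f a * α + f b * φ α + f c * φ (φ α) + (α + φ α + φ (φ α) + f u) ^ t = f u ^ t
          rw [hTα, zero_add]
          have hLα : f a * α + f b * φ α + f c * φ (φ α) = 0 := by
            rw [hαq2, hαq]
            have : f (a + b * ω + c * ω ^ 2) = 0 := by rw [h1, map_zero]
            rw [map_add, map_add, map_mul, map_mul, map_pow, ← hω'def] at this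
            linear_combination α * this
          rw [hLα, zero_add]
        rw [hFα, hF0]
      · intro h2
        have hα20 : α ^ 2 ≠ 0 := pow_ne_zero 2 hα0
        apply hα20
        apply hinj
        have hα2q : φ (α ^ 2) = ω' ^ 2 * α ^ 2 := by rw [map_pow φ α 2, hαq]; ring
        have hφω : φ ω' = ω' := by rw [hω'def]; exact hφf ω
        have hα2q2 : φ (φ (α ^ 2)) = ω' * α ^ 2 := by
          rw [hα2q, map_mul, map_pow φ ω' 2, hφω, hα2q]
          linear_combination ω' * α ^ 2 * hω'3
        have hTα2 : α ^ 2 + φ (α ^ 2) + φ (φ (α ^ 2)) = 0 := by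
          rw [hα2q2, hα2q]
          linear_combination α ^ 2 * hω'sum
        have hFα2 : Ffun (α ^ 2) = f u ^ t := by
          rw [hFdef]
          show f a * α ^ 2 + f b * φ (α ^ 2) + f c * φ (φ (α ^ 2)) +
            (α ^ 2 + φ (α ^ 2) + φ (φ (α ^ 2)) + f u) ^ t = f u ^ t
          rw [hTα2, zero_add]
          have hLα2 : f a * α ^ 2 + f b * φ (α ^ 2) + f c * φ (φ (α ^ 2)) = 0 := by
            rw [hα2q2, hα2q]
            have : f (a + b * ω ^ 2 + c * ω) = 0 := by rw [h2, map_zero]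
            rw [map_add, map_add, map_mul, map_mul, map_pow, ← hω'def] at this
            linear_combination α ^ 2 * this
          rw [hLα2, zero_add]
        rw [hFα2, hF0]
    · rw [← Finite.surjective_iff_bijective]
      intro z
      obtain ⟨x, hx⟩ := hsurj (f (3⁻¹ * (z - (a + b + c) * u)))
      refine ⟨τ x + u, ?_⟩
      have h1 := hτF x
      rw [hx, hτfs] at h1
      have h31 : (3 : F) * 3⁻¹ = 1 := mul_inv_cancel₀ h3F
      show (a + b + c) * (τ x + u) + 3 * (τ x + u) ^ t = z
      linear_combination -h1 + (z - (a + b + c) * u) * h31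
  · rintro ⟨hprod, hg⟩
    obtain ⟨h1, h2⟩ := mul_ne_zero_iff.mp hprod
    rw [← Finite.injective_iff_bijective]
    intro x x' hxx'
    have hτeq : τ x = τ x' := by
      have e1 := hτF x
      have e2 := hτF x'
      rw [hxx'] at e1
      have heq : (a + b + c) * (τ x + u) + 3 * (τ x + u) ^ t
          = (a + b + c) * (τ x' + u) + 3 * (τ x' + u) ^ t := by
        linear_combination e2 - e1
      have := hg.injective (a₁ := τ x + u) (a₂ := τ x' + u) heq
      exact add_right_cancel this
    have hTeq : x + φ x + φ (φ x) = x' + φ x' + φ (φ x') := by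
      rw [← hτ x, ← hτ x', hτeq]
    have hTsub : (x - x') + φ (x - x') + φ (φ (x - x')) = 0 := by
      rw [map_sub, map_sub]
      linear_combination hTeq
    have hLsub : f a * (x - x') + f b * φ (x - x') + f c * φ (φ (x - x')) = 0 := by
      have hpow : (x + φ x + φ (φ x) + f u) ^ t = (x' + φ x' + φ (φ x') + f u) ^ t := by
        rw [hTeq]
      have hexp : f a * x + f b * φ x + f c * φ (φ x) + (x + φ x + φ (φ x) + f u) ^ t
          = f a * x' + f b * φ x' + f c * φ (φ x') + (x' + φ x' + φ (φ x') + f u) ^ t := hxx'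
      rw [map_sub, map_sub]
      linear_combination hexp - hpow
    have := hkey h1 h2 (x - x') hTsub hLsub
    exact sub_eq_zero.mp this
end

section
/- Let q be a prime power with q ≡ 1 (mod 3), α ∈ GF(q³)\GF(q) with α³ ∈ GF(q), ω = α^{q−1}, t a positive integer with t ≢ 1 (mod 3), and a, b, c, u ∈ GF(q). Then F₁(x) = ax + bx^q + cx^{q²} + (x + ωx^q + ω²x^{q²} + uα²)^t is a permutation of GF(q³) if and only if (a+b+c)(a + bω + cω²)(a + bω² + cω) ≠ 0. -/
/-!
In the basis `1, α, α²` of `E` over `F` the Frobenius `x ↦ x ^ q` acts diagonally, with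
eigenvalues `1, ω, ω²`. Hence `ax + bx^q + cx^{q²}` is diagonal with entries
`a + b + c`, `a + bω + cω²`, `a + bω² + cω`, while `x + ωx^q + ω²x^{q²} + uα² = (3x₃ + u)α²`.
As `t ≢ 1 (mod 3)`, `α^{2t} = (α³)^k α^r` with `r ∈ {0, 1}` lies in `F + Fα`, so the power term
only adds a function of `x₃` to the first two coordinates. The map is therefore triangular in
these coordinates, and bijective exactly when its diagonal entries are nonzero.
-/

theorem natCast_ne_zero_of_card_mod_eq_one {K : Type*} [Field K] [Fintype K] {n : ℕ}
    (h : Fintype.card K % n = 1) : (n : K) ≠ 0 := by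
  intro hn
  have hcard : ((Fintype.card K : ℕ) : K) = n * (Fintype.card K / n : ℕ) + 1 := by
    conv_lhs => rw [← Nat.div_add_mod (Fintype.card K) n, h]
    push_cast; ring
  simp [hn] at hcard

theorem one_add_self_add_sq_eq_zero {R : Type*} [CommRing R] [IsDomain R] {ω : R}
    (hω3 : ω ^ 3 = 1) (hω1 : ω ≠ 1) : 1 + ω + ω ^ 2 = 0 :=
  (mul_eq_zero.mp (by linear_combination hω3 : (ω - 1) * (1 + ω + ω ^ 2) = 0)).resolve_left
    (sub_ne_zero.mpr hω1)

theorem Function.Semiconj.bijective_iff_of_bijective {α β : Type*} {ψ : α → β} {g : α → α}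
    {f : β → β} (h : Function.Semiconj ψ g f) (hψ : Function.Bijective ψ) :
    Function.Bijective f ↔ Function.Bijective g := by
  rw [← hψ.of_comp_iff f, ← h.comp_eq, hψ.of_comp_iff']

theorem bijective_triangular_iff {K : Type*} [Field K] (l₁ l₂ l₃ : K) (f g : K → K) :
    Function.Bijective
        (fun v : K × K × K => (l₁ * v.1 + f v.2.2, l₂ * v.2.1 + g v.2.2, l₃ * v.2.2)) ↔
      l₁ * l₂ * l₃ ≠ 0 := by
  constructor
  · intro hG h0
    rcases mul_eq_zero.mp h0 with h12 | h3
    · rcases mul_eq_zero.mp h12 with h1 | h2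
      · simpa using hG.injective (a₁ := (1, 0, 0)) (a₂ := (0, 0, 0)) (by simp [h1])
      · simpa using hG.injective (a₁ := (0, 1, 0)) (a₂ := (0, 0, 0)) (by simp [h2])
    · obtain ⟨v, hv⟩ := hG.surjective (0, 0, 1)
      simp [h3] at hv
  · intro h
    obtain ⟨⟨h1, h2⟩, h3⟩ := mul_ne_zero_iff.mp h |>.imp_left mul_ne_zero_iff.mp
    refine Function.bijective_iff_has_inverse.mpr ⟨fun w => ((w.1 - f (w.2.2 / l₃)) / l₁,
      (w.2.1 - g (w.2.2 / l₃)) / l₂, w.2.2 / l₃), ?_, ?_⟩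
    · rintro ⟨x₁, x₂, x₃⟩
      simp [h1, h2, h3]
    · rintro ⟨y₁, y₂, y₃⟩
      simp [h1, h2, h3, mul_div_cancel₀]

section Coordinates

variable {F E : Type*} [Field F] [Field E] [Algebra F E]

variable (F) in
def coordMap (α : E) : F × F × F →ₗ[F] E where
  toFun v := algebraMap F E v.1 + algebraMap F E v.2.1 * α + algebraMap F E v.2.2 * α ^ 2
  map_add' v w := by simp only [Prod.fst_add, Prod.snd_add, map_add]; ring
  map_smul' c v := by
    simp only [Prod.smul_fst, Prod.smul_snd, smul_eq_mul, map_mul, RingHom.id_apply]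
    rw [Algebra.smul_def]
    ring

@[simp]
theorem coordMap_apply (α : E) (v : F × F × F) :
    coordMap F α v =
      algebraMap F E v.1 + algebraMap F E v.2.1 * α + algebraMap F E v.2.2 * α ^ 2 :=
  rfl

theorem algebraMap_mul_coordMap (α : E) (c : F) (v : F × F × F) :
    algebraMap F E c * coordMap F α v = coordMap F α (c • v) := by
  rw [map_smul, Algebra.smul_def]

theorem exists_pow_two_mul_eq_coordMap {α : E} (hα3 : α ^ 3 ∈ Set.range (algebraMap F E))
    {t : ℕ} (ht : t % 3 ≠ 1) : ∃ y₁ y₂ : F, α ^ (2 * t) = coordMap F α (y₁, y₂, 0) := by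
  obtain ⟨s, hs⟩ := hα3
  have hdiv : α ^ (2 * t) = (α ^ 3) ^ (2 * t / 3) * α ^ (2 * t % 3) := by
    rw [← pow_mul, ← pow_add, Nat.div_add_mod]
  rcases (by omega : 2 * t % 3 = 0 ∨ 2 * t % 3 = 1) with hr | hr
  · exact ⟨s ^ (2 * t / 3), 0, by simp [hdiv, hr, ← hs]⟩
  · exact ⟨0, s ^ (2 * t / 3), by simp [hdiv, hr, ← hs]⟩

variable [Fintype F] {α : E} {ω : F}

theorem coordMap_pow_card (hαq : α ^ Fintype.card F = algebraMap F E ω * α) (v : F × F × F) :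
    coordMap F α v ^ Fintype.card F = coordMap F α (v.1, ω * v.2.1, ω ^ 2 * v.2.2) := by
  rw [← FiniteField.frobeniusAlgHom_apply]
  simp only [coordMap_apply, map_add, map_mul, map_pow, AlgHom.commutes,
    FiniteField.frobeniusAlgHom_apply, hαq]
  ring

theorem coordMap_pow_card_sq (hαq : α ^ Fintype.card F = algebraMap F E ω * α) (hω3 : ω ^ 3 = 1)
    (v : F × F × F) :
    coordMap F α v ^ Fintype.card F ^ 2 = coordMap F α (v.1, ω ^ 2 * v.2.1, ω * v.2.2) := by
  rw [sq, pow_mul, coordMap_pow_card hαq, coordMap_pow_card hαq]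
  congr 1
  refine Prod.ext rfl (Prod.ext ?_ ?_) <;> dsimp only
  · ring
  · linear_combination ω * v.2.2 * hω3

theorem coordMap_add_mul_pow_card_add_mul_pow_card_sq
    (hαq : α ^ Fintype.card F = algebraMap F E ω * α) (hω3 : ω ^ 3 = 1) (hω1 : ω ≠ 1)
    (v : F × F × F) :
    coordMap F α v + algebraMap F E ω * coordMap F α v ^ Fintype.card F +
        algebraMap F E (ω ^ 2) * coordMap F α v ^ Fintype.card F ^ 2 =
      coordMap F α (0, 0, 3 * v.2.2) := by
  have hsum := one_add_self_add_sq_eq_zero hω3 hω1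
  rw [coordMap_pow_card hαq, coordMap_pow_card_sq hαq hω3, algebraMap_mul_coordMap,
    algebraMap_mul_coordMap, ← map_add, ← map_add]
  congr 1
  refine Prod.ext ?_ (Prod.ext ?_ ?_) <;>
    simp only [Prod.fst_add, Prod.snd_add, Prod.smul_fst, Prod.smul_snd, smul_eq_mul]
  · linear_combination v.1 * hsum
  · linear_combination v.2.1 * ω * hω3 + v.2.1 * hsum
  · linear_combination 2 * v.2.2 * hω3

theorem coordMap_injective (hα0 : α ≠ 0) (h3 : (3 : F) ≠ 0)
    (hαq : α ^ Fintype.card F = algebraMap F E ω * α) (hω3 : ω ^ 3 = 1) (hω1 : ω ≠ 1) :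
    Function.Injective (coordMap F α) := by
  refine (injective_iff_map_eq_zero _).mpr fun ⟨x₁, x₂, x₃⟩ hx => ?_
  have hq0 : Fintype.card F ≠ 0 := Fintype.card_ne_zero
  have hx₃ : x₃ = 0 := by
    have h := coordMap_add_mul_pow_card_add_mul_pow_card_sq hαq hω3 hω1 (x₁, x₂, x₃)
    simpa [hx, hq0, h3, hα0] using h.symm
  subst hx₃
  have hx₂ : x₂ = 0 := by
    have h := coordMap_pow_card hαq (x₁, x₂, 0)
    rw [hx, zero_pow hq0] at h
    have : algebraMap F E ((ω - 1) * x₂) * α = 0 := by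
      simp only [coordMap_apply, map_zero, zero_mul, add_zero, mul_zero, map_mul] at h hx
      simp only [map_mul, map_sub, map_one]
      linear_combination -h - hx
    simpa [hα0, sub_eq_zero, hω1] using this
  subst hx₂
  simpa using hx

theorem coordMap_bijective (hdim : Module.finrank F E = 3) (hα0 : α ≠ 0) (h3 : (3 : F) ≠ 0)
    (hαq : α ^ Fintype.card F = algebraMap F E ω * α) (hω3 : ω ^ 3 = 1) (hω1 : ω ≠ 1) :
    Function.Bijective (coordMap F α) := by
  have : FiniteDimensional F E := Module.finite_of_finrank_pos (by omega)
  have hinj := coordMap_injective hα0 h3 hαq hω3 hω1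
  exact ⟨hinj, (LinearMap.injective_iff_surjective_of_finrank_eq_finrank (by simp [hdim])).mp hinj⟩

end Coordinates

theorem stmt_19_general {F E : Type*} [Field F] [Fintype F] [Field E] [Algebra F E]
    (hq : Fintype.card F % 3 = 1) (hdim : Module.finrank F E = 3)
    (α : E) (hα : α ∉ Set.range (algebraMap F E))
    (hα3 : α ^ 3 ∈ Set.range (algebraMap F E))
    (ω : F) (hω : algebraMap F E ω = α ^ (Fintype.card F - 1))
    (hω3 : ω ^ 3 = 1) (hω1 : ω ≠ 1)
    (t : ℕ) (htm : t % 3 ≠ 1) (a b c u : F) :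
    Function.Bijective (fun x : E =>
      algebraMap F E a * x + algebraMap F E b * x ^ Fintype.card F +
        algebraMap F E c * x ^ Fintype.card F ^ 2 +
        (x + algebraMap F E ω * x ^ Fintype.card F +
          algebraMap F E (ω ^ 2) * x ^ Fintype.card F ^ 2 +
          algebraMap F E u * α ^ 2) ^ t)
      ↔ (a + b + c) * (a + b * ω + c * ω ^ 2) * (a + b * ω ^ 2 + c * ω) ≠ 0 := by
  have hαq : α ^ Fintype.card F = algebraMap F E ω * α := by
    rw [hω, ← pow_succ, Nat.sub_add_cancel Fintype.card_pos]
  have hα0 : α ≠ 0 := by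
    rintro rfl
    exact hα ⟨0, map_zero _⟩
  have h3 : (3 : F) ≠ 0 := by exact_mod_cast natCast_ne_zero_of_card_mod_eq_one hq
  obtain ⟨y₁, y₂, hy⟩ := exists_pow_two_mul_eq_coordMap hα3 htm
  refine (Function.Semiconj.bijective_iff_of_bijective (fun v => ?_)
    (coordMap_bijective hdim hα0 h3 hαq hω3 hω1)).trans (bijective_triangular_iff _ _ _
      (fun z => (3 * z + u) ^ t * y₁) (fun z => (3 * z + u) ^ t * y₂))
  have hpow : (coordMap F α (0, 0, 3 * v.2.2) + algebraMap F E u * α ^ 2) ^ t =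
      coordMap F α ((3 * v.2.2 + u) ^ t • (y₁, y₂, 0)) := by
    rw [← algebraMap_mul_coordMap, ← hy, map_pow, pow_mul, ← mul_pow]
    simp only [coordMap_apply, map_zero, map_add]
    ring
  rw [coordMap_add_mul_pow_card_add_mul_pow_card_sq hαq hω3 hω1, hpow, coordMap_pow_card hαq,
    coordMap_pow_card_sq hαq hω3, algebraMap_mul_coordMap, algebraMap_mul_coordMap,
    algebraMap_mul_coordMap, ← map_add, ← map_add, ← map_add]
  congr 1
  refine Prod.ext ?_ (Prod.ext ?_ ?_) <;>
    simp only [Prod.fst_add, Prod.snd_add, Prod.smul_fst, Prod.smul_snd, smul_eq_mul] <;> ring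

/-- ax + bx^q + cx^{q²} + (x + ωx^q + ω²x^{q²} + uα²)^t over GF(q³),
q ≡ 1 (mod 3), t ≢ 1 (mod 3). -/
theorem stmt_19 {F E : Type*} [Field F] [Fintype F] [Field E] [Fintype E] [Algebra F E]
    (hq : Fintype.card F % 3 = 1) (hdim : Module.finrank F E = 3)
    (α : E) (hα : α ∉ Set.range (algebraMap F E))
    (hα3 : α ^ 3 ∈ Set.range (algebraMap F E))
    (ω : F) (hω : algebraMap F E ω = α ^ (Fintype.card F - 1))
    (hω3 : ω ^ 3 = 1) (hω1 : ω ≠ 1)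
    (t : ℕ) (ht : 0 < t) (htm : t % 3 ≠ 1) (a b c u : F) :
    Function.Bijective (fun x : E =>
      algebraMap F E a * x + algebraMap F E b * x ^ Fintype.card F +
        algebraMap F E c * x ^ Fintype.card F ^ 2 +
        (x + algebraMap F E ω * x ^ Fintype.card F +
          algebraMap F E (ω ^ 2) * x ^ Fintype.card F ^ 2 +
          algebraMap F E u * α ^ 2) ^ t)
      ↔ (a + b + c) * (a + b * ω + c * ω ^ 2) * (a + b * ω ^ 2 + c * ω) ≠ 0 :=
  stmt_19_general hq hdim α hα hα3 ω hω hω3 hω1 t htm a b c u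
end
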